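/- arXiv:2411.18492 — 3 statements merged into one kernel-verified Lean document; each statement's English description precedes it below -/
import Mathlib

section
/- For every positive integer m and every complex s with Re s ≥ 1/2, the series occurring in the definition of K(m, s) converge absolutely, the factors Σ_{k≥0} r(p^k)² p^{−ks} are nonzero, |K(m, s)| ≤ τ_{2000}(m), where τ_k(m) denotes the number of ordered k-tuples of positive integers whose product is m; moreover there is an absolute constant C such that |K(p, s) − r(p)| ≤ C · p^{−Re s} for every prime p and every s with Re s ≥ 1/2. -/
noncomputable section

open Complex Finset MeasureTheory

namespace EpsteinPaper

/-- `d` is a fundamental discriminant. -/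
def IsFundDisc (d : ℤ) : Prop :=
  (d % 4 = 1 ∧ Squarefree d) ∨
  (d % 4 = 0 ∧ Squarefree (d / 4) ∧ (d / 4 % 4 = 2 ∨ d / 4 % 4 = 3))

/-- Generalized binomial coefficient `z choose k`. -/
def gchoose (z : ℂ) (k : ℕ) : ℂ := (∏ i ∈ Finset.range k, (z - (i : ℂ))) / (k.factorial : ℂ)

/-- `τ_k(m)`: the number of ordered `k`-tuples of positive integers with product `m`. -/
def tauk (k m : ℕ) : ℕ := Nat.card {f : Fin k → ℕ // ∏ i, f i = m}

/-- `τ(m)`: the number of divisors of `m`. -/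
def tau (m : ℕ) : ℕ := m.divisors.card

/-- `(m, d^∞)`: the largest divisor of `m` supported on primes dividing `d`. -/
def corad (m d : ℕ) : ℕ :=
  ∏ p ∈ m.primeFactors.filter (fun p => p ∣ d), p ^ (m.factorization p)

/-- `G_N = ∏_{p | N} (1 + p^{-3/4})²`. -/
def GNfac (N : ℕ) : ℝ := ∏ p ∈ N.primeFactors, (1 + (p : ℝ) ^ (-(3 / 4 : ℝ))) ^ 2

/-- The data of the paper: two moduli together with Dirichlet characters on them. -/
structure Ctx where
  d₁ : ℕ
  d₂ : ℕ
  χ₁ : DirichletCharacter ℂ d₁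
  χ₂ : DirichletCharacter ℂ d₂

namespace Ctx

/-- `D = d₁ d₂`. -/
def D (P : Ctx) : ℕ := P.d₁ * P.d₂

/-- Swapping the roles of the two characters. -/
def swap (P : Ctx) : Ctx := ⟨P.d₂, P.d₁, P.χ₂, P.χ₁⟩

/-- The standing hypotheses: `d₁, d₂` are positive and coprime, `-D` is a fundamental
discriminant, and `χ₁, χ₂` are real primitive Dirichlet characters. -/
def Good (P : Ctx) : Prop :=
  0 < P.d₁ ∧ 0 < P.d₂ ∧ Nat.Coprime P.d₁ P.d₂ ∧
  IsFundDisc (-(P.D : ℤ)) ∧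
  P.χ₁.IsPrimitive ∧ P.χ₂.IsPrimitive ∧
  (∀ a : ZMod P.d₁, star (P.χ₁ a) = P.χ₁ a) ∧
  (∀ a : ZMod P.d₂, star (P.χ₂ a) = P.χ₂ a)

/-- `χ_D(n) = χ_{d₁}(n) χ_{d₂}(n)` as a function on `ℕ`. -/
def chiD (P : Ctx) (n : ℕ) : ℂ := P.χ₁ (n : ZMod P.d₁) * P.χ₂ (n : ZMod P.d₂)

/-- `χ_D` as a Dirichlet character modulo `D = d₁ d₂`. -/
def chiDchar (P : Ctx) : DirichletCharacter ℂ (P.d₁ * P.d₂) :=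
  (DirichletCharacter.changeLevel (dvd_mul_right P.d₁ P.d₂) P.χ₁) *
  (DirichletCharacter.changeLevel (dvd_mul_left P.d₂ P.d₁) P.χ₂)

/-- `r(n) = Σ_{ab=n} χ_{d₁}(a) χ_{d₂}(b)`. -/
def r (P : Ctx) (n : ℕ) : ℂ :=
  ∑ p ∈ n.divisorsAntidiagonal, P.χ₁ (p.1 : ZMod P.d₁) * P.χ₂ (p.2 : ZMod P.d₂)

/-- `α` is the multiplicative function whose generating series at each prime `p` is
`((1 - χ_{d₁}(p) x) (1 - χ_{d₂}(p) x))^{1/2}` (principal binomial series); equivalently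
`Σ α(ν) ν^{-s} = (L(s,χ_{d₁}) L(s,χ_{d₂}))^{-1/2}` for `Re s > 1`. -/
def IsAlpha (P : Ctx) (α : ℕ → ℂ) : Prop :=
  α 1 = 1 ∧
  (∀ m n : ℕ, Nat.Coprime m n → α (m * n) = α m * α n) ∧
  (∀ p : ℕ, p.Prime → ∀ k : ℕ, α (p ^ k) =
    ∑ ij ∈ Finset.HasAntidiagonal.antidiagonal k,
      gchoose (1 / 2) ij.1 * (-(P.χ₁ (p : ZMod P.d₁))) ^ ij.1 *
        (gchoose (1 / 2) ij.2 * (-(P.χ₂ (p : ZMod P.d₂))) ^ ij.2))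

end Ctx

/-- The smoothing weight `𝓛(ν)`. -/
def LL (X : ℝ) (ν : ℕ) : ℝ :=
  if (ν : ℝ) < Real.sqrt X then 1
  else if (ν : ℝ) ≤ X then 2 * Real.log (X / (ν : ℝ)) / Real.log X
  else 0

/-- `β(ν) = α(ν) 𝓛(ν)`. -/
def betaf (α : ℕ → ℂ) (X : ℝ) (ν : ℕ) : ℂ := α ν * ((LL X ν : ℝ) : ℂ)

/-- The mollifier `η(s) = Σ_{ν ≤ X} β(ν) ν^{-s}`. -/
def eta (α : ℕ → ℂ) (X : ℝ) (s : ℂ) : ℂ :=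
  ∑ ν ∈ Finset.Icc 1 ⌊X⌋₊, betaf α X ν * (ν : ℂ) ^ (-s)

namespace Ctx

/-- `L(s) = L(s, χ_{d₁}) L(s, χ_{d₂})`. -/
def Lfun (P : Ctx) [NeZero P.d₁] [NeZero P.d₂] (s : ℂ) : ℂ :=
  P.χ₁.LFunction s * P.χ₂.LFunction s

/-- `F(t) = (2π/√D)^{-(1/2+it)} Γ(1/2+it) L(1/2+it) |η(1/2+it)|² e^{(π/2 - 1/T) t}`. -/
def Ffun (P : Ctx) [NeZero P.d₁] [NeZero P.d₂] (α : ℕ → ℂ) (T X : ℝ) (t : ℝ) : ℂ :=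
  (((2 * Real.pi / Real.sqrt (P.D : ℝ) : ℝ)) : ℂ) ^ (-(1 / 2 + Complex.I * (t : ℂ))) *
  Complex.Gamma (1 / 2 + Complex.I * (t : ℂ)) *
  P.Lfun (1 / 2 + Complex.I * (t : ℂ)) *
  ((‖eta α X (1 / 2 + Complex.I * (t : ℂ))‖ ^ 2 : ℝ) : ℂ) *
  ((Real.exp ((Real.pi / 2 - 1 / T) * t) : ℝ) : ℂ)

/-- `I(t, H) = ∫_t^{t+H} F(u) du`. -/
def Ifun (P : Ctx) [NeZero P.d₁] [NeZero P.d₂] (α : ℕ → ℂ) (T X t H : ℝ) : ℂ :=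
  ∫ u in t..(t + H), P.Ffun α T X u

/-- The function `G(y)` (with `δ = 1/T`). -/
def Gfun (P : Ctx) (α : ℕ → ℂ) (T X : ℝ) (y : ℝ) : ℝ :=
  (‖(∑ ν₁ ∈ Finset.Icc 1 ⌊X⌋₊, ∑ ν₂ ∈ Finset.Icc 1 ⌊X⌋₊,
    betaf α X ν₁ * betaf α X ν₂ / (ν₂ : ℂ) *
    ∑' n : ℕ, P.r n *
      Complex.exp (-(((2 * Real.pi * (n : ℝ) * (ν₁ : ℝ) /
          (Real.sqrt (P.D : ℝ) * (ν₂ : ℝ)) * y : ℝ)) : ℂ) *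
        (((Real.sin (1 / T) : ℝ) : ℂ) + Complex.I * ((Real.cos (1 / T) : ℝ) : ℂ))))‖) ^ 2

/-- `J(x, θ) = ∫_x^∞ G(u) u^{-θ} du`. -/
def Jfun (P : Ctx) (α : ℕ → ℂ) (T X θ x : ℝ) : ℝ :=
  ∫ u in Set.Ioi x, P.Gfun α T X u * u ^ (-θ)

/-- The Euler-factor function `K(m, s)`. -/
def Kf (P : Ctx) (m : ℕ) (s : ℂ) : ℂ :=
  ∏ p ∈ m.primeFactors,
    ((∑' k : ℕ, (P.r (p ^ k)) ^ 2 * (p : ℂ) ^ (-(k : ℂ) * s))⁻¹ *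
     (∑' k : ℕ, P.r (p ^ (m.factorization p + k)) * P.r (p ^ k) * (p : ℂ) ^ (-(k : ℂ) * s)))

/-- `K_{l,l}(m, z)` in its "sum" form (an entire function of `z`); the case `l = 1`.  The case
`l = 2` is obtained by applying this to `P.swap`. -/
def KllS (P : Ctx) (m : ℕ) (z : ℂ) : ℂ :=
  ((corad m P.d₁ : ℕ) : ℂ) ^ (-z) *
  P.χ₁ ((corad m P.d₂ : ℕ) : ZMod P.d₁) * P.χ₂ ((corad m P.d₁ : ℕ) : ZMod P.d₂) *
  ∏ p ∈ m.primeFactors.filter (fun p => ¬ p ∣ P.D),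
    (1 + P.chiD p / (p : ℂ))⁻¹ * (P.χ₁ (p : ZMod P.d₁)) ^ (m.factorization p) *
    ((∑ j ∈ Finset.range (m.factorization p + 1), P.chiD (p ^ j) * (p : ℂ) ^ (-(j : ℂ) * z)) -
      (p : ℂ) ^ (-(z + 1)) *
        ∑ j ∈ Finset.range (m.factorization p - 1), P.chiD (p ^ j) * (p : ℂ) ^ (-(j : ℂ) * z))

/-- `K_{l,l}(m, z)` in its original "product" form; the case `l = 1`. -/
def KllP (P : Ctx) (m : ℕ) (z : ℂ) : ℂ :=
  ((corad m P.d₁ : ℕ) : ℂ) ^ (-z) *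
  P.χ₁ ((corad m P.d₂ : ℕ) : ZMod P.d₁) * P.χ₂ ((corad m P.d₁ : ℕ) : ZMod P.d₂) *
  ∏ p ∈ m.primeFactors.filter (fun p => ¬ p ∣ P.D),
    (1 - (p : ℂ) ^ (-(2 : ℂ)))⁻¹ * (1 - P.chiD p * (p : ℂ) ^ (-z))⁻¹ * (1 - P.chiD p / (p : ℂ)) *
    (P.χ₁ (p : ZMod P.d₁)) ^ (m.factorization p) *
    (1 - (p : ℂ) ^ (-(z + 1)) +
      P.chiD (p ^ (m.factorization p + 1)) *
        (p : ℂ) ^ (-((m.factorization p : ℂ) * z + 1)) * (1 - (p : ℂ) ^ (-(z - 1))))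

/-- `K_{l,l}` for `l ∈ {1, 2}` (sum form). -/
def Kl (P : Ctx) (l : Fin 2) : ℕ → ℂ → ℂ :=
  if l = 0 then P.KllS else P.swap.KllS

/-- `K_{1,2}(m₁, m₂, z)`. -/
def K12 (P : Ctx) (m₁ m₂ : ℕ) (z : ℂ) : ℂ :=
  P.χ₁ (m₁ : ZMod P.d₁) * P.χ₂ (m₂ : ZMod P.d₂) *
  (∑ q ∈ (corad (m₁ * m₂ / P.D) P.D).divisors, (q : ℂ) ^ (-z)) *
  ∏ p ∈ (m₁ * m₂).primeFactors.filter (fun p => ¬ p ∣ P.D),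
    (1 + P.chiD p / (p : ℂ))⁻¹ *
    ((∑ j ∈ Finset.range ((m₁ * m₂).factorization p + 1), (p : ℂ) ^ (-(j : ℂ) * z)) -
      P.chiD p * (p : ℂ) ^ (-(z + 1)) *
        ∑ j ∈ Finset.range ((m₁ * m₂).factorization p - 1), (p : ℂ) ^ (-(j : ℂ) * z))

end Ctx

/-- The Gauss sum `G(χ) = Σ_{x mod d} χ(x) e^{2πi x/d}`. -/
def gaussS (d : ℕ) (χ : DirichletCharacter ℂ d) : ℂ :=
  ∑ x ∈ Finset.range d, χ (x : ZMod d) * Complex.exp (2 * (Real.pi : ℂ) * Complex.I * (x : ℂ) / (d : ℂ))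

/-- `χ(x / y)`, with the convention that this is `0` when `y ∤ x`. -/
def chiAt (d : ℕ) (χ : DirichletCharacter ℂ d) (x y : ℕ) : ℂ :=
  if y ∣ x then χ ((x / y : ℕ) : ZMod d) else 0

namespace Ctx

/-- The exponential sum `ε_q(l)`. -/
def epsq (P : Ctx) (m₁ m₂ l q : ℕ) : ℂ :=
  ∑ a ∈ (Finset.range q).filter (fun a => Nat.Coprime a q),
    Complex.exp (-(2 * (Real.pi : ℂ) * Complex.I * (a : ℂ) * (l : ℂ)) / (q : ℂ)) *
    (gaussS P.d₁ P.χ₁ / ((Real.sqrt (P.d₁ : ℝ) : ℝ) : ℂ) *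
        P.χ₁ ((a * (m₁ / Nat.gcd m₁ q) : ℕ) : ZMod P.d₁) *
        chiAt P.d₂ P.χ₂ (q / Nat.gcd q m₁) P.d₁ +
      gaussS P.d₂ P.χ₂ / ((Real.sqrt (P.d₂ : ℝ) : ℝ) : ℂ) *
        P.χ₂ ((a * (m₁ / Nat.gcd m₁ q) : ℕ) : ZMod P.d₂) *
        chiAt P.d₁ P.χ₁ (q / Nat.gcd q m₁) P.d₂) *
    ((starRingEnd ℂ) (gaussS P.d₁ P.χ₁) / ((Real.sqrt (P.d₁ : ℝ) : ℝ) : ℂ) *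
        P.χ₁ ((a * (m₂ / Nat.gcd m₂ q) : ℕ) : ZMod P.d₁) *
        chiAt P.d₂ P.χ₂ (q / Nat.gcd q m₂) P.d₁ +
      (starRingEnd ℂ) (gaussS P.d₂ P.χ₂) / ((Real.sqrt (P.d₂ : ℝ) : ℝ) : ℂ) *
        P.χ₂ ((a * (m₂ / Nat.gcd m₂ q) : ℕ) : ZMod P.d₂) *
        chiAt P.d₁ P.χ₁ (q / Nat.gcd q m₂) P.d₂)

/-- The `q`-th term of the singular series `σ(l, m₁, m₂)`. -/
def sigTerm (P : Ctx) (m₁ m₂ l q : ℕ) : ℂ :=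
  P.epsq m₁ m₂ l q * ((Nat.gcd q (m₁ * m₂) : ℕ) : ℂ) /
    ((q : ℂ) ^ 2 *
      ((Real.sqrt (((P.D / Nat.gcd (q / Nat.gcd q m₁) P.D) *
          (P.D / Nat.gcd (q / Nat.gcd q m₂) P.D) : ℕ) : ℝ) : ℝ) : ℂ))

/-- The singular series `σ(l, m₁, m₂) = Σ_{q ≥ 1} ε_q(l) (q, m₁m₂) / (q² √(r₁ r₂))`. -/
def sigmaS (P : Ctx) (m₁ m₂ l : ℕ) : ℂ :=
  ∑' q : ℕ, if q = 0 then 0 else P.sigTerm m₁ m₂ l q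

/-- The shifted-convolution Dirichlet series `D_{m₁,m₂}(s, l)`. -/
def Dser (P : Ctx) (m₁ m₂ l : ℕ) (s : ℂ) : ℂ :=
  ∑' n : ℕ, (if m₂ ∣ (m₁ * n + l) then P.r ((m₁ * n + l) / m₂) else 0) * P.r n *
    ((m₁ : ℂ) * (n : ℂ) + (l : ℂ) / 2) ^ (-s)

/-- The fourfold Selberg sum `S(z)` built from `K`. -/
def Ssum (P : Ctx) (α : ℕ → ℂ) (X : ℝ) (z : ℂ) : ℂ :=
  ∑ ν₁ ∈ Finset.Icc 1 ⌊X⌋₊, ∑ ν₂ ∈ Finset.Icc 1 ⌊X⌋₊,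
    ∑ ν₃ ∈ Finset.Icc 1 ⌊X⌋₊, ∑ ν₄ ∈ Finset.Icc 1 ⌊X⌋₊,
      betaf α X ν₁ * betaf α X ν₂ * betaf α X ν₃ * betaf α X ν₄ / ((ν₂ : ℂ) * (ν₄ : ℂ)) *
      (((Nat.gcd (ν₁ * ν₄) (ν₂ * ν₃) : ℕ) : ℂ) / ((ν₁ : ℂ) * (ν₃ : ℂ))) ^ ((1 : ℂ) - z) *
      P.Kf ((ν₁ * ν₄) / Nat.gcd (ν₁ * ν₄) (ν₂ * ν₃)) (1 - z) *
      P.Kf ((ν₂ * ν₃) / Nat.gcd (ν₁ * ν₄) (ν₂ * ν₃)) (1 - z)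

/-- The fourfold Selberg sum `S_{l,l}(z)` built from `K_{l,l}`. -/
def Sll (P : Ctx) (α : ℕ → ℂ) (l : Fin 2) (X : ℝ) (z : ℂ) : ℂ :=
  ∑ ν₁ ∈ Finset.Icc 1 ⌊X⌋₊, ∑ ν₂ ∈ Finset.Icc 1 ⌊X⌋₊,
    ∑ ν₃ ∈ Finset.Icc 1 ⌊X⌋₊, ∑ ν₄ ∈ Finset.Icc 1 ⌊X⌋₊,
      betaf α X ν₁ * betaf α X ν₂ * betaf α X ν₃ * betaf α X ν₄ / ((ν₂ : ℂ) * (ν₄ : ℂ)) *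
      (((Nat.gcd (ν₁ * ν₄) (ν₂ * ν₃) : ℕ) : ℂ) / ((ν₁ : ℂ) * (ν₃ : ℂ))) ^ ((1 : ℂ) - z) *
      P.Kl l ((ν₁ * ν₄) / Nat.gcd (ν₁ * ν₄) (ν₂ * ν₃)) z *
      P.Kl l ((ν₂ * ν₃) / Nat.gcd (ν₁ * ν₄) (ν₂ * ν₃)) z

/-- The sum `S_z(X₁, γ, N)` built from `K`. -/
def SzK (P : Ctx) (α : ℕ → ℂ) (X₁ : ℝ) (γ z : ℂ) (N : ℕ) : ℂ :=
  ∑ ν ∈ (Finset.Icc 1 ⌊X₁⌋₊).filter (fun ν => Nat.Coprime ν N),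
    α ν * P.Kf ν (1 - z) * (ν : ℂ) ^ (γ - 1) * ((Real.log (X₁ / (ν : ℝ)) : ℝ) : ℂ)

/-- The sum `S_z^{(l,l)}(X₁, γ, N)` built from `K_{l,l}`. -/
def SzKll (P : Ctx) (α : ℕ → ℂ) (l : Fin 2) (X₁ : ℝ) (γ z : ℂ) (N : ℕ) : ℂ :=
  ∑ ν ∈ (Finset.Icc 1 ⌊X₁⌋₊).filter (fun ν => Nat.Coprime ν N),
    α ν * P.Kl l ν z * (ν : ℂ) ^ (γ - 1) * ((Real.log (X₁ / (ν : ℝ)) : ℝ) : ℂ)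

/-- The number of units in the ring of integers of `ℚ(√-D)`. -/
def unitsD (P : Ctx) : ℝ := if P.D = 3 then 6 else if P.D = 4 then 4 else 2

/-- `h` is the class number of `ℚ(√-D)`, characterized by Dirichlet's class number formula
`L(1, χ_D) = 2 π h / (w √D)`. -/
def IsClassNumber (P : Ctx) [NeZero (P.d₁ * P.d₂)] (h : ℕ) : Prop :=
  DirichletCharacter.LFunction P.chiDchar 1 =
    (((2 * Real.pi * (h : ℝ) / (P.unitsD * Real.sqrt (P.D : ℝ)) : ℝ)) : ℂ)

end Ctx


def Complex.abs : AbsoluteValue ℂ ℝ := IsAbsoluteValue.toAbsoluteValue (norm : ℂ → ℝ)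

lemma Complex.norm_eq_abs (z : ℂ) : ‖z‖ = Complex.abs z := rfl

lemma Complex.abs_natCast (n : ℕ) : Complex.abs (n : ℂ) = n := by
  rw [← Complex.norm_eq_abs]; simp

lemma Complex.sq_abs (z : ℂ) : Complex.abs z ^ 2 = Complex.normSq z := by
  rw [← Complex.norm_eq_abs]; exact _root_.Complex.sq_norm z

lemma Complex.abs_cpow_eq_rpow_re_of_pos {x : ℝ} (hx : 0 < x) (y : ℂ) :
    Complex.abs ((x : ℂ) ^ y) = x ^ y.re := by
  rw [← Complex.norm_eq_abs]; exact _root_.Complex.norm_cpow_eq_rpow_re_of_pos hx y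


section Aux



lemma tauk_finite (k m : ℕ) (hm : 0 < m) : Finite {f : Fin k → ℕ // ∏ i, f i = m} := by
  have hb : ∀ (f : Fin k → ℕ), (∏ i, f i = m) → ∀ i : Fin k, f i < m + 1 := by
    intro f hf i
    exact Nat.lt_succ_of_le (Nat.le_of_dvd hm (hf ▸ Finset.dvd_prod_of_mem f (Finset.mem_univ i)))
  refine Finite.of_injective (fun f => (fun i => (⟨f.1 i, hb f.1 f.2 i⟩ : Fin (m+1)))) ?_
  intro f g h
  refine Subtype.ext (funext fun i => ?_)
  simpa using congrArg Fin.val (congrFun h i)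

lemma tauk_primePow {p : ℕ} (hp : p.Prime) {a : ℕ} (ha : 0 < a) :
    1999 * a ≤ tauk 2000 (p ^ a) := by
  have hfin : Finite {f : Fin 2000 → ℕ // ∏ i, f i = p ^ a} := tauk_finite _ _ (pow_pos hp.pos a)
  have h1 : (1999 * a) = Nat.card (Fin 1999 × Fin a) := by
    rw [Nat.card_prod, Nat.card_eq_fintype_card, Nat.card_eq_fintype_card,
      Fintype.card_fin, Fintype.card_fin]
  rw [tauk, h1]
  set js : Fin 1999 → Fin 2000 := fun j => ⟨j.1 + 1, by omega⟩ with hjs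
  have hjs0 : ∀ j, js j ≠ 0 := by
    intro j hc
    have := congrArg Fin.val hc
    simp only [hjs, Fin.val_zero] at this
    omega
  set F : Fin 1999 × Fin a → (Fin 2000 → ℕ) := fun ji =>
    Function.update (Function.update (fun _ => 1) (0 : Fin 2000) (p ^ (a - (ji.2.1 + 1))))
      (js ji.1) (p ^ (ji.2.1 + 1)) with hF
  have hprod : ∀ ji, ∏ c, F ji c = p ^ a := by
    rintro ⟨j, i⟩
    rw [hF]
    simp only []
    rw [Finset.prod_update_of_mem (Finset.mem_univ _),
      Finset.prod_update_of_mem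
        (Finset.mem_sdiff.mpr ⟨Finset.mem_univ _, by
          simp only [Finset.mem_singleton]
          exact fun hc => hjs0 j hc.symm⟩)]
    simp only [Finset.prod_const_one, mul_one, ← pow_add]
    congr 1
    have : i.1 < a := i.2
    omega
  apply Nat.card_le_card_of_injective (fun ji => ⟨F ji, hprod ji⟩)
  rintro ⟨j, i⟩ ⟨j', i'⟩ h
  have hfe : F (j, i) = F (j', i') := congrArg Subtype.val h
  have hone : ∀ (k : ℕ), 1 < p ^ (k + 1) := fun k => Nat.one_lt_pow (by omega) hp.one_lt
  have hj : j = j' := by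
    by_contra hne
    have hvv : js j ≠ js j' := by
      intro hc
      apply hne
      have := congrArg Fin.val hc
      simp only [hjs] at this
      exact Fin.ext (by omega)
    have h1 := congrFun hfe (js j)
    rw [hF] at h1
    simp only [Function.update_self, Function.update_of_ne hvv, Function.update_of_ne (hjs0 j)] at h1
    exact absurd h1 (Nat.ne_of_gt (hone i.1))
  subst hj
  have h1 := congrFun hfe (js j)
  rw [hF] at h1
  simp only [Function.update_self] at h1
  have hii : i.1 + 1 = i'.1 + 1 := Nat.pow_right_injective hp.two_le h1
  obtain rfl : i = i' := Fin.ext (Nat.succ_injective hii)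
  rfl

lemma tauk_superm (k : ℕ) {M N : ℕ} (hM : 0 < M) (hN : 0 < N) (hMN : Nat.Coprime M N) :
    tauk k M * tauk k N ≤ tauk k (M * N) := by
  have : Finite {f : Fin k → ℕ // ∏ i, f i = M * N} := tauk_finite _ _ (by positivity)
  have hrec : ∀ (f g : Fin k → ℕ), (∏ i, f i = M) → (∏ i, g i = N) →
      ∀ i, Nat.gcd (f i * g i) M = f i := by
    intro f g hf hg i
    have hfM : f i ∣ M := hf ▸ Finset.dvd_prod_of_mem f (Finset.mem_univ i)
    have hgN : g i ∣ N := hg ▸ Finset.dvd_prod_of_mem g (Finset.mem_univ i)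
    rw [Nat.Coprime.gcd_mul_right_cancel (f i) (Nat.Coprime.coprime_dvd_left hgN hMN.symm)]
    exact Nat.gcd_eq_left hfM
  rw [tauk, tauk, tauk, ← Nat.card_prod]
  apply Nat.card_le_card_of_injective
    (fun fg => (⟨fun i => fg.1.1 i * fg.2.1 i, by
      simp only []; rw [Finset.prod_mul_distrib, fg.1.2, fg.2.2]⟩ : {f : Fin k → ℕ // ∏ i, f i = M * N}))
  rintro ⟨⟨f, hf⟩, ⟨g, hg⟩⟩ ⟨⟨f', hf'⟩, ⟨g', hg'⟩⟩ h
  simp only [Subtype.mk.injEq, Prod.mk.injEq] at h ⊢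
  have hfe : ∀ i, f i = f' i := by
    intro i
    have := congrFun h i
    have h1 := hrec f g hf hg i
    have h2 := hrec f' g' hf' hg' i
    rw [← h1, ← h2, this]
  have hge : ∀ i, g i = g' i := by
    intro i
    have hne : f i ≠ 0 := by
      intro h0
      have hfM : f i ∣ M := hf ▸ Finset.dvd_prod_of_mem f (Finset.mem_univ i)
      rw [h0] at hfM; omega
    have := congrFun h i
    rw [hfe i] at this
    have hne' : f' i ≠ 0 := (hfe i) ▸ hne
    exact Nat.eq_of_mul_eq_mul_left (Nat.pos_of_ne_zero hne') this
  exact ⟨funext hfe, funext hge⟩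

lemma tauk_lower : ∀ m : ℕ, 0 < m →
    (∏ p ∈ m.primeFactors, 1999 * m.factorization p) ≤ tauk 2000 m := by
  intro m
  induction m using Nat.recOnPosPrimePosCoprime with
  | prime_pow p n hp hn =>
    intro _
    rw [Nat.primeFactors_prime_pow hn.ne' hp, Finset.prod_singleton,
      Nat.Prime.factorization_pow (p := p) (k := n) hp, Finsupp.single_eq_same]
    exact tauk_primePow hp hn
  | zero => intro h; omega
  | one =>
    intro _
    have : Nonempty {f : Fin 2000 → ℕ // ∏ i, f i = 1} := ⟨⟨fun _ => 1, by simp⟩⟩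
    have : Finite {f : Fin 2000 → ℕ // ∏ i, f i = 1} := tauk_finite _ _ one_pos
    simp only [Nat.primeFactors_one, Finset.prod_empty]
    exact Nat.card_pos
  | coprime a b ha hb hab iha ihb =>
    intro _
    have ha0 : a ≠ 0 := by omega
    have hb0 : b ≠ 0 := by omega
    rw [Nat.Coprime.primeFactors_mul hab,
      Finset.prod_union (Nat.Coprime.disjoint_primeFactors hab)]
    have hfa : ∀ p ∈ a.primeFactors, 1999 * (a * b).factorization p = 1999 * a.factorization p := by
      intro p hpa
      have hpb : p ∉ b.primeFactors := Finset.disjoint_left.mp (Nat.Coprime.disjoint_primeFactors hab) hpa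
      rw [Nat.factorization_mul ha0 hb0, Finsupp.add_apply]
      have hz : b.factorization p = 0 := (Nat.factorization_eq_zero_iff b p).mpr
        (Or.inr (Or.inl (fun hd => hpb (Nat.mem_primeFactors.mpr
          ⟨Nat.prime_of_mem_primeFactors hpa, hd, hb0⟩))))
      rw [hz, add_zero]
    have hfb : ∀ p ∈ b.primeFactors, 1999 * (a * b).factorization p = 1999 * b.factorization p := by
      intro p hpb
      have hpa : p ∉ a.primeFactors := Finset.disjoint_right.mp (Nat.Coprime.disjoint_primeFactors hab) hpb
      rw [Nat.factorization_mul ha0 hb0, Finsupp.add_apply]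
      have hz : a.factorization p = 0 := (Nat.factorization_eq_zero_iff a p).mpr
        (Or.inr (Or.inl (fun hd => hpa (Nat.mem_primeFactors.mpr
          ⟨Nat.prime_of_mem_primeFactors hpb, hd, ha0⟩))))
      rw [hz, zero_add]
    rw [Finset.prod_congr rfl hfa, Finset.prod_congr rfl hfb]
    calc (∏ p ∈ a.primeFactors, 1999 * a.factorization p) *
        ∏ p ∈ b.primeFactors, 1999 * b.factorization p
        ≤ tauk 2000 a * tauk 2000 b :=
          Nat.mul_le_mul (iha (by omega)) (ihb (by omega))
      _ ≤ tauk 2000 (a * b) := tauk_superm 2000 (by omega) (by omega) hab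



/-- The conjunction of goals for one Euler factor. -/
def Goals (R : ℕ → ℂ) (x : ℂ) (a : ℕ) : Prop :=
  Summable (fun k : ℕ => Complex.abs ((R k) ^ 2 * x ^ k)) ∧
  Summable (fun k : ℕ => Complex.abs (R (a + k) * R k * x ^ k)) ∧
  (∑' k : ℕ, (R k) ^ 2 * x ^ k) ≠ 0 ∧
  Complex.abs ((∑' k : ℕ, (R k) ^ 2 * x ^ k)⁻¹ * ∑' k : ℕ, R (a + k) * R k * x ^ k) ≤ 1999 * a ∧
  (a = 1 → Complex.abs ((∑' k : ℕ, (R k) ^ 2 * x ^ k)⁻¹ *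
    (∑' k : ℕ, R (a + k) * R k * x ^ k) - R 1) ≤ 7 * Complex.abs x)

lemma abs_tsum_le {f : ℕ → ℂ} {g : ℕ → ℝ} (hfg : ∀ k, Complex.abs (f k) ≤ g k)
    (hg : Summable g) : Complex.abs (∑' k, f k) ≤ ∑' k, g k := by
  have hnorm : Summable fun k => ‖f k‖ :=
    hg.of_nonneg_of_le (fun k => norm_nonneg _)
      (fun k => by simpa [Complex.norm_eq_abs] using hfg k)
  calc Complex.abs (∑' k, f k) = ‖∑' k, f k‖ := (Complex.norm_eq_abs _).symm
    _ ≤ ∑' k, ‖f k‖ := norm_tsum_le_tsum_norm hnorm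
    _ ≤ ∑' k, g k := by
        apply Summable.tsum_le_tsum _ hnorm hg
        intro k
        simpa [Complex.norm_eq_abs] using hfg k

section helpers
variable {K : Type*} [NormedField K] [CharZero K]

lemma hasSum_linear {x : K} (hx : ‖x‖ < 1) :
    HasSum (fun k : ℕ => ((k : K) + 1) * x ^ k) (1 / (1 - x) ^ 2) := by
  have h := hasSum_choose_mul_geometric_of_norm_lt_one 1 hx
  have he : (fun k : ℕ => ((k : K) + 1) * x ^ k) =
      fun k : ℕ => (((k + 1).choose 1 : ℕ) : K) * x ^ k := by
    funext k
    rw [Nat.choose_one_right]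
    push_cast
    ring
  rw [he]
  exact h

lemma hasSum_sq {x : K} (hx : ‖x‖ < 1) :
    HasSum (fun k : ℕ => ((k : K) + 1) ^ 2 * x ^ k) ((1 + x) / (1 - x) ^ 3) := by
  have hx1 : x ≠ 1 := by rintro rfl; simp at hx
  have hne : (1 : K) - x ≠ 0 := sub_ne_zero.mpr (Ne.symm hx1)
  have h2 := hasSum_choose_mul_geometric_of_norm_lt_one 2 hx
  have h := (h2.mul_left 2).sub (hasSum_linear hx)
  have he : (fun k : ℕ => 2 * (((((k + 2).choose 2 : ℕ)) : K) * x ^ k) - ((k : K) + 1) * x ^ k)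
      = fun k : ℕ => ((k : K) + 1) ^ 2 * x ^ k := by
    funext k
    rw [Nat.cast_choose_two]
    push_cast
    ring
  rw [he] at h
  convert h using 1
  · rfl
  field_simp
  ring
end helpers

lemma abs_one_add_ge (x : ℂ) : 1 - Complex.abs x ≤ Complex.abs (1 + x) := by
  have h := Complex.abs.add_le (1 + x) (-x)
  rw [add_neg_cancel_right, Complex.abs.map_neg, map_one] at h
  linarith

lemma abs_one_sub_le (x : ℂ) : Complex.abs (1 - x) ≤ 1 + Complex.abs x := by
  calc Complex.abs (1 - x) = Complex.abs (1 + -x) := by rw [sub_eq_add_neg]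
    _ ≤ Complex.abs 1 + Complex.abs (-x) := Complex.abs.add_le 1 (-x)
    _ = 1 + Complex.abs x := by rw [map_one, Complex.abs.map_neg]



lemma goals_triv (x : ℂ) (a : ℕ) (ha : 1 ≤ a) (R : ℕ → ℂ)
    (hR : ∀ k, R k = if k = 0 then 1 else 0) : Goals R x a := by
  have hAfun : ∀ k : ℕ, (R k) ^ 2 * x ^ k = if k = 0 then 1 else 0 := by
    intro k
    rcases Nat.eq_zero_or_pos k with rfl | hk
    · simp [hR]
    · simp [hR, Nat.pos_iff_ne_zero.mp hk]
  have hBfun : ∀ k : ℕ, R (a + k) * R k * x ^ k = 0 := by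
    intro k
    have : a + k ≠ 0 := by omega
    rw [hR (a + k), if_neg this, zero_mul, zero_mul]
  have hA : (∑' k : ℕ, (R k) ^ 2 * x ^ k) = 1 := by
    rw [tsum_eq_single 0 (fun k hk => by rw [hAfun k, if_neg hk])]
    rw [hAfun 0, if_pos rfl]
  have hB : (∑' k : ℕ, R (a + k) * R k * x ^ k) = 0 := by
    simp only [hBfun]
    exact tsum_zero
  refine ⟨?_, ?_, ?_, ?_, ?_⟩
  · apply summable_of_ne_finset_zero (s := {0})
    intro k hk
    simp only [Finset.mem_singleton] at hk
    rw [hAfun k, if_neg hk, map_zero]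
  · apply summable_of_ne_finset_zero (s := (∅ : Finset ℕ))
    intro k _
    rw [hBfun k, map_zero]
  · rw [hA]; exact one_ne_zero
  · rw [hB, mul_zero, map_zero]
    positivity
  · intro ha1
    rw [hB, mul_zero, hR 1, if_neg one_ne_zero, sub_zero, map_zero]
    positivity

lemma goals_geom (x : ℂ) (hx2 : Complex.abs x ^ 2 ≤ 1 / 2) (a : ℕ) (ha : 1 ≤ a)
    (ε : ℂ) (hε : ε = 1 ∨ ε = -1) (R : ℕ → ℂ) (hR : ∀ k, R k = ε ^ k) : Goals R x a := by
  have hε2 : ε ^ 2 = 1 := by rcases hε with rfl | rfl <;> ring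
  have hεa : Complex.abs ε = 1 := by rcases hε with rfl | rfl <;> simp
  have ht0 : 0 ≤ Complex.abs x := Complex.abs.nonneg x
  have hx1 : ‖x‖ < 1 := by
    rw [Complex.norm_eq_abs]
    nlinarith
  have hne : (1 : ℂ) - x ≠ 0 := by
    refine sub_ne_zero.mpr (fun hh => ?_)
    rw [← hh] at hx1
    simp at hx1
  have hAfun : ∀ k : ℕ, (R k) ^ 2 * x ^ k = x ^ k := by
    intro k
    rw [hR, ← pow_mul, mul_comm k 2, pow_mul, hε2, one_pow, one_mul]
  have hBfun : ∀ k : ℕ, R (a + k) * R k * x ^ k = ε ^ a * x ^ k := by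
    intro k
    rw [hR, hR, ← pow_add, show a + k + k = a + 2 * k by omega, pow_add, pow_mul, hε2,
      one_pow, mul_one]
  have hA : (∑' k : ℕ, (R k) ^ 2 * x ^ k) = (1 - x)⁻¹ := by
    simp only [hAfun]
    exact tsum_geometric_of_norm_lt_one hx1
  have hB : (∑' k : ℕ, R (a + k) * R k * x ^ k) = ε ^ a * (1 - x)⁻¹ := by
    simp only [hBfun]
    rw [tsum_mul_left, tsum_geometric_of_norm_lt_one hx1]
  have hgs : Summable (fun k : ℕ => Complex.abs x ^ k) :=
    summable_geometric_of_lt_one ht0 (by rwa [Complex.norm_eq_abs] at hx1)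
  refine ⟨?_, ?_, ?_, ?_, ?_⟩
  · refine hgs.congr fun k => ?_
    rw [hAfun k, map_pow]
  · refine hgs.congr fun k => ?_
    rw [hBfun k, map_mul, map_pow, map_pow, hεa, one_pow, one_mul]
  · rw [hA]
    exact inv_ne_zero hne
  · rw [hA, hB, inv_inv, show (1 - x) * (ε ^ a * (1 - x)⁻¹) = ε ^ a * ((1 - x) * (1 - x)⁻¹) by
      ring, mul_inv_cancel₀ hne, mul_one, map_pow, hεa, one_pow]
    have : (1 : ℝ) ≤ (a : ℝ) := by exact_mod_cast ha
    linarith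
  · intro ha1
    subst ha1
    rw [hA, hB, inv_inv, show (1 - x) * (ε ^ 1 * (1 - x)⁻¹) = ε ^ 1 * ((1 - x) * (1 - x)⁻¹) by
      ring, mul_inv_cancel₀ hne, mul_one, pow_one, hR 1, pow_one, sub_self, map_zero]
    positivity


lemma goals_alt (x : ℂ) (hx2 : Complex.abs x ^ 2 ≤ 1 / 2) (a : ℕ) (ha : 1 ≤ a)
    (R : ℕ → ℂ) (hR : ∀ k, R k = if Even k then 1 else 0) : Goals R x a := by
  have ht0 : 0 ≤ Complex.abs x := Complex.abs.nonneg x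
  have ht : Complex.abs x ≤ 0.7072 := by nlinarith
  have hx1 : ‖x‖ < 1 := by rw [Complex.norm_eq_abs]; nlinarith
  have hx1' : ‖-x‖ < 1 := by rwa [norm_neg]
  have hterm : ∀ k : ℕ, (R k) ^ 2 * x ^ k = 2⁻¹ * (x ^ k + (-x) ^ k) := by
    intro k
    rcases Nat.even_or_odd k with hk | hk
    · rw [hR, if_pos hk, hk.neg_pow]
      ring
    · rw [hR, if_neg (Nat.not_even_iff_odd.mpr hk), hk.neg_pow]
      ring
  have hsum : HasSum (fun k : ℕ => (R k) ^ 2 * x ^ k) (2⁻¹ * ((1 - x)⁻¹ + (1 - -x)⁻¹)) := by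
    have h := ((hasSum_geometric_of_norm_lt_one hx1).add
      (hasSum_geometric_of_norm_lt_one hx1')).mul_left (2⁻¹ : ℂ)
    rw [funext hterm]
    exact h
  have h1 : (1 : ℂ) - x ≠ 0 := by
    refine sub_ne_zero.mpr (fun hh => ?_)
    rw [← hh] at hx1; simp at hx1
  have h2 : (1 : ℂ) + x ≠ 0 := by
    intro hh
    have : x = -1 := by linear_combination hh
    rw [this] at hx1; simp at hx1
  have hsq : (1 : ℂ) - x ^ 2 ≠ 0 := by
    intro hh
    have : (1 - x) * (1 + x) = 0 := by linear_combination hh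
    rcases mul_eq_zero.mp this with h | h
    exacts [h1 h, h2 h]
  have hA : (∑' k : ℕ, (R k) ^ 2 * x ^ k) = (1 - x ^ 2)⁻¹ := by
    rw [hsum.tsum_eq]
    rw [show (1 : ℂ) - -x = 1 + x by ring]
    field_simp
    ring
  have hRabs : ∀ k, Complex.abs (R k) ≤ 1 := by
    intro k
    rw [hR]
    split <;> simp
  have hgs : Summable (fun k : ℕ => Complex.abs x ^ k) :=
    summable_geometric_of_lt_one ht0 (by rwa [Complex.norm_eq_abs] at hx1)
  have hBb : ∀ k : ℕ, Complex.abs (R (a + k) * R k * x ^ k) ≤ Complex.abs x ^ k := by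
    intro k
    rw [map_mul, map_mul, map_pow]
    have h1 := hRabs (a + k)
    have h2 := hRabs k
    have h3 : Complex.abs (R (a + k)) * Complex.abs (R k) * Complex.abs x ^ k ≤
        1 * 1 * Complex.abs x ^ k := by
      gcongr <;> positivity
    simpa using h3
  have hsummB : Summable (fun k : ℕ => Complex.abs (R (a + k) * R k * x ^ k)) :=
    hgs.of_nonneg_of_le (fun k => Complex.abs.nonneg _) hBb
  have habsB : Complex.abs (∑' k : ℕ, R (a + k) * R k * x ^ k) ≤ (1 - Complex.abs x)⁻¹ := by
    calc Complex.abs (∑' k : ℕ, R (a + k) * R k * x ^ k) ≤ ∑' k : ℕ, Complex.abs x ^ k :=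
          abs_tsum_le hBb hgs
      _ = (1 - Complex.abs x)⁻¹ :=
          tsum_geometric_of_lt_one ht0 (by rwa [Complex.norm_eq_abs] at hx1)
  refine ⟨?_, ?_, ?_, ?_, ?_⟩
  · refine Summable.of_nonneg_of_le (fun k => Complex.abs.nonneg _) (fun k => ?_)
      (hgs.mul_left 1)
    rw [hterm k, map_mul]
    have e1 : Complex.abs (2⁻¹ : ℂ) = 2⁻¹ := by rw [← Complex.norm_eq_abs]; norm_num
    rw [e1]
    have tri : Complex.abs (x ^ k + (-x) ^ k) ≤ Complex.abs x ^ k + Complex.abs x ^ k := by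
      have h := Complex.abs.add_le (x ^ k) ((-x) ^ k)
      rwa [map_pow, map_pow, Complex.abs.map_neg] at h
    calc 2⁻¹ * Complex.abs (x ^ k + (-x) ^ k)
        ≤ 2⁻¹ * (Complex.abs x ^ k + Complex.abs x ^ k) := by linarith
      _ = 1 * Complex.abs x ^ k := by ring
  · exact hsummB
  · rw [hA]
    exact inv_ne_zero hsq
  · rw [hA, inv_inv, map_mul]
    have habs1mx2 : Complex.abs (1 - x ^ 2) ≤ 1 + Complex.abs x ^ 2 := by
      calc Complex.abs (1 - x ^ 2) ≤ 1 + Complex.abs (x ^ 2) := abs_one_sub_le (x ^ 2)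
        _ = 1 + Complex.abs x ^ 2 := by rw [map_pow]
    have hinv : (1 - Complex.abs x)⁻¹ ≤ (1 - 0.7072 : ℝ)⁻¹ := by
      apply inv_anti₀ <;> nlinarith
    have ha1 : (1:ℝ) ≤ (a:ℝ) := by exact_mod_cast ha
    calc Complex.abs (1 - x ^ 2) * Complex.abs (∑' k : ℕ, R (a + k) * R k * x ^ k)
        ≤ (1 + Complex.abs x ^ 2) * (1 - Complex.abs x)⁻¹ := by
          apply mul_le_mul habs1mx2 habsB (Complex.abs.nonneg _) (by positivity)
      _ ≤ 1999 * a := by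
          have : (1 - Complex.abs x)⁻¹ ≤ (1 - 0.7072:ℝ)⁻¹ := hinv
          nlinarith [ht0, hx2]
  · intro ha1
    subst ha1
    have hB0 : ∀ k : ℕ, R (1 + k) * R k * x ^ k = 0 := by
      intro k
      rcases Nat.even_or_odd k with hk | hk
      · have : ¬ Even (1 + k) := by
          rw [add_comm, Nat.even_add_one]
          exact fun h => h hk
        rw [hR (1 + k), if_neg this]
        ring
      · rw [hR k, if_neg (Nat.not_even_iff_odd.mpr hk)]
        ring
    have hB : (∑' k : ℕ, R (1 + k) * R k * x ^ k) = 0 := by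
      simp only [hB0]
      exact tsum_zero
    rw [hB, mul_zero, hR 1, if_neg (by decide), sub_zero, map_zero]
    positivity


lemma goals_same (x : ℂ) (hx2 : Complex.abs x ^ 2 ≤ 1 / 2) (a : ℕ) (ha : 1 ≤ a)
    (ε : ℂ) (hε : ε = 1 ∨ ε = -1) (R : ℕ → ℂ)
    (hR : ∀ k, R k = ((k : ℂ) + 1) * ε ^ k) : Goals R x a := by
  have hε2 : ε ^ 2 = 1 := by rcases hε with rfl | rfl <;> ring
  have hεa : Complex.abs ε = 1 := by rcases hε with rfl | rfl <;> simp
  set t : ℝ := Complex.abs x with hts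
  have ht0 : 0 ≤ t := Complex.abs.nonneg x
  have ht : t ≤ 0.7072 := by nlinarith
  have hx1 : ‖x‖ < 1 := by rw [Complex.norm_eq_abs, ← hts]; nlinarith
  have ht1 : t < 1 := by rwa [Complex.norm_eq_abs, ← hts] at hx1
  have htn : ‖t‖ < 1 := by rw [Real.norm_eq_abs, _root_.abs_of_nonneg ht0]; exact ht1
  have h1 : (1 : ℂ) - x ≠ 0 := by
    refine sub_ne_zero.mpr (fun hh => ?_)
    rw [← hh] at hx1; simp at hx1
  have h2 : (1 : ℂ) + x ≠ 0 := by
    intro hh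
    have hx : x = -1 := by linear_combination hh
    rw [hx] at hx1; simp at hx1
  have habs1 : ∀ k : ℕ, Complex.abs ((k : ℂ) + 1) = (k : ℝ) + 1 := by
    intro k
    rw [show ((k : ℂ) + 1) = (((k + 1 : ℕ)) : ℂ) by push_cast; ring, Complex.abs_natCast]
    push_cast; ring
  have hpow : ∀ k : ℕ, ε ^ (2 * k) = 1 := by
    intro k
    rw [pow_mul, hε2, one_pow]
  -- A
  have hAterm : ∀ k : ℕ, (R k) ^ 2 * x ^ k = ((k : ℂ) + 1) ^ 2 * x ^ k := by
    intro k
    rw [hR, mul_pow, ← pow_mul, mul_comm k 2, hpow, mul_one]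
  have hA : (∑' k : ℕ, (R k) ^ 2 * x ^ k) = (1 + x) / (1 - x) ^ 3 := by
    rw [funext hAterm]
    exact (hasSum_sq hx1).tsum_eq
  have hAne : (1 + x) / (1 - x) ^ 3 ≠ 0 := div_ne_zero h2 (pow_ne_zero 3 h1)
  -- B
  have hBterm : ∀ k : ℕ, R (a + k) * R k * x ^ k
      = ε ^ a * (((a : ℂ) + k + 1) * ((k : ℂ) + 1) * x ^ k) := by
    intro k
    rw [hR, hR]
    have he : ε ^ (a + k) * ε ^ k = ε ^ a := by
      rw [← pow_add, show a + k + k = a + 2 * k by omega, pow_add, hpow, mul_one]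
    push_cast
    calc ((a : ℂ) + k + 1) * ε ^ (a + k) * (((k : ℂ) + 1) * ε ^ k) * x ^ k
        = ((a : ℂ) + k + 1) * ((k : ℂ) + 1) * x ^ k * (ε ^ (a + k) * ε ^ k) := by ring
      _ = ε ^ a * (((a : ℂ) + k + 1) * ((k : ℂ) + 1) * x ^ k) := by rw [he]; ring
  -- real comparison sums
  have hs2 : HasSum (fun k : ℕ => ((k : ℝ) + 1) ^ 2 * t ^ k) ((1 + t) / (1 - t) ^ 3) :=
    hasSum_sq htn
  have hs1 : HasSum (fun k : ℕ => ((k : ℝ) + 1) * t ^ k) (1 / (1 - t) ^ 2) :=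
    hasSum_linear htn
  have hsB : HasSum (fun k : ℕ => ((a : ℝ) + k + 1) * ((k : ℝ) + 1) * t ^ k)
      ((1 + t) / (1 - t) ^ 3 + a * (1 / (1 - t) ^ 2)) := by
    have h := hs2.add (hs1.mul_left (a : ℝ))
    have he : (fun k : ℕ => ((k : ℝ) + 1) ^ 2 * t ^ k + (a : ℝ) * (((k : ℝ) + 1) * t ^ k))
        = fun k : ℕ => ((a : ℝ) + k + 1) * ((k : ℝ) + 1) * t ^ k := by
      funext k; ring
    rwa [he] at h
  have habsA : ∀ k : ℕ, Complex.abs ((R k) ^ 2 * x ^ k) = ((k : ℝ) + 1) ^ 2 * t ^ k := by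
    intro k
    rw [hAterm k, map_mul, map_pow, map_pow, habs1]
  have habsB : ∀ k : ℕ, Complex.abs (R (a + k) * R k * x ^ k)
      = ((a : ℝ) + k + 1) * ((k : ℝ) + 1) * t ^ k := by
    intro k
    rw [hBterm k, map_mul, map_pow, hεa, one_pow, one_mul, map_mul, map_mul, map_pow,
      habs1, show ((a : ℂ) + k + 1) = (((a + k : ℕ) : ℂ) + 1) by push_cast; ring, habs1]
    push_cast; ring
  have hsummB : Summable (fun k : ℕ => Complex.abs (R (a + k) * R k * x ^ k)) := by
    rw [funext habsB]; exact hsB.summable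
  -- lower bound for |A|
  have habsAval : Complex.abs ((1 + x) / (1 - x) ^ 3) ≥ (1 - t) / (1 + t) ^ 3 := by
    rw [map_div₀, map_pow]
    apply div_le_div₀ (Complex.abs.nonneg _) (abs_one_add_ge x)
    · have : 0 < Complex.abs (1 - x) := Complex.abs.pos h1
      positivity
    · exact pow_le_pow_left₀ (Complex.abs.nonneg _) (abs_one_sub_le x) 3
  have hABbound : Complex.abs (∑' k : ℕ, R (a + k) * R k * x ^ k)
      ≤ (1 + t) / (1 - t) ^ 3 + a * (1 / (1 - t) ^ 2) := by
    rw [← hsB.tsum_eq]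
    exact abs_tsum_le (fun k => le_of_eq (habsB k)) hsB.summable
  have hd : (0.2928 : ℝ) ≤ 1 - t := by linarith
  have hd0 : (0 : ℝ) < 1 - t := by linarith
  have hu : 1 + t ≤ 1.7072 := by linarith
  have hu0 : (0 : ℝ) < 1 + t := by linarith
  have ha1 : (1 : ℝ) ≤ (a : ℝ) := by exact_mod_cast ha
  -- numeric: (1+t)/(1-t)^3 + a/(1-t)^2 ≤ 1999 a (1-t)/(1+t)^3
  have hnum : (1 + t) / (1 - t) ^ 3 + a * (1 / (1 - t) ^ 2)
      ≤ 1999 * a * ((1 - t) / (1 + t) ^ 3) := by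
    have e1 : (1 + t) / (1 - t) ^ 3 ≤ 1.7072 / 0.2928 ^ 3 := by
      apply div_le_div₀ (by norm_num) hu (by positivity)
      exact pow_le_pow_left₀ (by norm_num) hd 3
    have e2 : (1 : ℝ) / (1 - t) ^ 2 ≤ 1 / 0.2928 ^ 2 := by
      apply div_le_div₀ (by norm_num) le_rfl (by positivity)
      exact pow_le_pow_left₀ (by norm_num) hd 2
    have e3 : 1999 * ((0.2928 : ℝ) / 1.7072 ^ 3) ≤ 1999 * ((1 - t) / (1 + t) ^ 3) := by
      apply mul_le_mul_of_nonneg_left _ (by norm_num)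
      apply div_le_div₀ (by positivity) hd (by positivity)
      exact pow_le_pow_left₀ (by positivity) hu 3
    have c1 : (1.7072 : ℝ) / 0.2928 ^ 3 ≤ 69 := by norm_num
    have c2 : (1 : ℝ) / 0.2928 ^ 2 ≤ 11.67 := by norm_num
    have c3 : (117 : ℝ) ≤ 1999 * ((0.2928 : ℝ) / 1.7072 ^ 3) := by norm_num
    have hmul : (a : ℝ) * (1 / (1 - t) ^ 2) ≤ (a : ℝ) * 11.67 :=
      mul_le_mul_of_nonneg_left (e2.trans c2) (by linarith)
    have hfin : 1999 * (a : ℝ) * ((0.2928 : ℝ) / 1.7072 ^ 3) ≤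
        1999 * a * ((1 - t) / (1 + t) ^ 3) := by
      calc 1999 * (a : ℝ) * ((0.2928 : ℝ) / 1.7072 ^ 3)
          = (a : ℝ) * (1999 * ((0.2928 : ℝ) / 1.7072 ^ 3)) := by ring
        _ ≤ (a : ℝ) * (1999 * ((1 - t) / (1 + t) ^ 3)) :=
            mul_le_mul_of_nonneg_left e3 (by linarith)
        _ = 1999 * a * ((1 - t) / (1 + t) ^ 3) := by ring
    have : (69 : ℝ) + a * 11.67 ≤ 1999 * a * ((0.2928 : ℝ) / 1.7072 ^ 3) := by
      have : (117 : ℝ) * a ≤ 1999 * (a : ℝ) * ((0.2928 : ℝ) / 1.7072 ^ 3) := by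
        calc (117 : ℝ) * a = (a : ℝ) * 117 := by ring
          _ ≤ (a : ℝ) * (1999 * ((0.2928 : ℝ) / 1.7072 ^ 3)) :=
              mul_le_mul_of_nonneg_left c3 (by linarith)
          _ = 1999 * (a : ℝ) * ((0.2928 : ℝ) / 1.7072 ^ 3) := by ring
      nlinarith
    linarith [e1, hmul]
  refine ⟨?_, ?_, ?_, ?_, ?_⟩
  · rw [funext habsA]
    exact hs2.summable
  · exact hsummB
  · rw [hA]
    exact hAne
  · rw [hA, map_mul, map_inv₀]
    have hApos : 0 < Complex.abs ((1 + x) / (1 - x) ^ 3) := Complex.abs.pos hAne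
    rw [inv_mul_le_iff₀ hApos] -- goal: abs B ≤ 1999*a * abs A ... careful order
    calc Complex.abs (∑' k : ℕ, R (a + k) * R k * x ^ k)
        ≤ (1 + t) / (1 - t) ^ 3 + a * (1 / (1 - t) ^ 2) := hABbound
      _ ≤ 1999 * a * ((1 - t) / (1 + t) ^ 3) := hnum
      _ ≤ 1999 * a * Complex.abs ((1 + x) / (1 - x) ^ 3) :=
          mul_le_mul_of_nonneg_left habsAval (by positivity)
      _ = Complex.abs ((1 + x) / (1 - x) ^ 3) * (1999 * a) := by ring
  · intro ha1'
    subst ha1'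
    have hBsum : HasSum (fun k : ℕ => R (1 + k) * R k * x ^ k) (ε * (2 / (1 - x) ^ 3)) := by
      have h2s := (hasSum_choose_mul_geometric_of_norm_lt_one 2 hx1).mul_left (ε * 2)
      have he : (fun k : ℕ => ε * 2 * ((((k + 2).choose 2 : ℕ) : ℂ) * x ^ k))
          = fun k : ℕ => R (1 + k) * R k * x ^ k := by
        funext k
        rw [hR, hR, Nat.cast_choose_two]
        have he2 : ε ^ (1 + k) * ε ^ k = ε := by
          rw [← pow_add, show 1 + k + k = 1 + 2 * k by omega, pow_add, hpow, mul_one, pow_one]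
        push_cast
        calc ε * 2 * (((k : ℂ) + 2) * ((k : ℂ) + 2 - 1) / 2 * x ^ k)
            = (((k : ℂ) + 1 + 1) * (((k : ℂ) + 1)) * x ^ k) * ε := by ring
          _ = ((1 : ℂ) + k + 1) * ε ^ (1 + k) * (((k : ℂ) + 1) * ε ^ k) * x ^ k := by
              rw [show ((1 : ℂ) + k + 1) * ε ^ (1 + k) * (((k : ℂ) + 1) * ε ^ k) * x ^ k
                  = ((1 : ℂ) + k + 1) * (((k : ℂ) + 1)) * x ^ k * (ε ^ (1 + k) * ε ^ k) by ring,
                he2]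
              ring
      rw [← he]
      convert h2s using 1
      · rfl
      ring
    have hK : (∑' k : ℕ, (R k) ^ 2 * x ^ k)⁻¹ * (∑' k : ℕ, R (1 + k) * R k * x ^ k) - R 1
        = -(2 * ε * x) / (1 + x) := by
      rw [hA, hBsum.tsum_eq, hR 1]
      field_simp
      ring
    rw [hK]
    rw [map_div₀, Complex.abs.map_neg, map_mul, map_mul]
    have e2 : Complex.abs (2 : ℂ) = 2 := by rw [← Complex.norm_eq_abs]; norm_num
    rw [e2, hεa, mul_one]
    have hpos : 0 < Complex.abs (1 + x) := Complex.abs.pos h2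
    rw [div_le_iff₀ hpos]
    have hge := abs_one_add_ge x
    nlinarith


lemma chi_vals {n : ℕ} (χ : DirichletCharacter ℂ n) (hreal : ∀ a : ZMod n, star (χ a) = χ a)
    (m : ZMod n) : χ m = 0 ∨ χ m = 1 ∨ χ m = -1 := by
  by_cases h : IsUnit m
  · right
    set z := χ m with hz
    have hnorm : ‖z‖ = 1 := by
      have h1 := DirichletCharacter.unit_norm_eq_one χ h.unit
      rwa [IsUnit.unit_spec] at h1
    have him : z.im = 0 := by
      have h2 := hreal m
      rw [← hz] at h2
      rw [← Complex.conj_eq_iff_im]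
      exact h2
    have hre2 : z.re ^ 2 = 1 := by
      have h3 : Complex.abs z ^ 2 = z.re ^ 2 + z.im ^ 2 := by
        rw [Complex.sq_abs, Complex.normSq_apply]; ring
      rw [Complex.norm_eq_abs] at hnorm
      rw [hnorm, him] at h3
      nlinarith
    have : (z.re - 1) * (z.re + 1) = 0 := by nlinarith
    rcases mul_eq_zero.mp this with h4 | h4
    · left
      have : z.re = 1 := by linarith
      exact Complex.ext (by simp [this]) (by simp [him])
    · right
      have : z.re = -1 := by linarith
      exact Complex.ext (by simp [this]) (by simp [him])
  · left
    exact χ.map_nonunit h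

lemma r_pp (P : Ctx) {p : ℕ} (hp : p.Prime) (k : ℕ) :
    P.r (p ^ k) = ∑ i ∈ Finset.range (k + 1),
      (P.χ₁ ((p : ZMod P.d₁))) ^ i * (P.χ₂ ((p : ZMod P.d₂))) ^ (k - i) := by
  rw [Ctx.r, Nat.sum_divisorsAntidiagonal
    (f := fun a b => P.χ₁ (a : ZMod P.d₁) * P.χ₂ (b : ZMod P.d₂)),
    Nat.divisors_prime_pow hp, Finset.sum_map]
  apply Finset.sum_congr rfl
  intro i hi
  have hik : i ≤ k := by
    simp only [Finset.mem_range] at hi; omega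
  simp only [Function.Embedding.coeFn_mk]
  rw [Nat.pow_div hik hp.pos]
  congr 1
  · rw [Nat.cast_pow, map_pow]
  · rw [Nat.cast_pow, map_pow]

lemma sum_neg_one (n : ℕ) : ∑ i ∈ Finset.range (n + 1), (-1 : ℂ) ^ i
    = if Even n then 1 else 0 := by
  induction n with
  | zero => simp
  | succ n ih =>
    rw [Finset.sum_range_succ, ih]
    by_cases h : Even n
    · rw [if_pos h, if_neg (by simpa [Nat.even_add_one] using h), Odd.neg_one_pow (by
        simpa [Nat.odd_add_one] using h)]
      ring
    · rw [if_neg h, if_pos (Nat.even_add_one.mpr h), Even.neg_one_pow (Nat.even_add_one.mpr h)]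
      ring

lemma sum_eps_00 (k : ℕ) :
    (∑ i ∈ Finset.range (k + 1), (0 : ℂ) ^ i * (0 : ℂ) ^ (k - i)) = if k = 0 then 1 else 0 := by
  rcases Nat.eq_zero_or_pos k with rfl | hk
  · simp
  · rw [if_neg (by omega)]
    apply Finset.sum_eq_zero
    intro i hi
    rcases Nat.eq_zero_or_pos i with rfl | hi0
    · rw [zero_pow (by omega : k - 0 ≠ 0)]; ring
    · rw [zero_pow (by omega : i ≠ 0)]; ring

lemma sum_eps_0r (ε : ℂ) (k : ℕ) :
    (∑ i ∈ Finset.range (k + 1), (0 : ℂ) ^ i * ε ^ (k - i)) = ε ^ k := by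
  rw [Finset.sum_eq_single_of_mem 0 (Finset.mem_range.mpr (by omega))]
  · simp
  · intro i _ hi0
    rw [zero_pow hi0]; ring

lemma sum_eps_r0 (ε : ℂ) (k : ℕ) :
    (∑ i ∈ Finset.range (k + 1), ε ^ i * (0 : ℂ) ^ (k - i)) = ε ^ k := by
  rw [Finset.sum_eq_single_of_mem k (Finset.mem_range.mpr (by omega))]
  · simp
  · intro i hi hi0
    have : i < k + 1 := Finset.mem_range.mp hi
    rw [zero_pow (by omega : k - i ≠ 0)]; ring

lemma sum_eps_same (ε : ℂ) (k : ℕ) :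
    (∑ i ∈ Finset.range (k + 1), ε ^ i * ε ^ (k - i)) = ((k : ℂ) + 1) * ε ^ k := by
  have h : ∀ i ∈ Finset.range (k + 1), ε ^ i * ε ^ (k - i) = ε ^ k := by
    intro i hi
    have : i ≤ k := by simpa [Nat.lt_succ] using Finset.mem_range.mp hi
    rw [← pow_add]
    congr 1
    omega
  rw [Finset.sum_congr rfl h, Finset.sum_const, Finset.card_range, nsmul_eq_mul]
  push_cast
  ring

lemma sum_eps_opp1 (k : ℕ) :
    (∑ i ∈ Finset.range (k + 1), (1 : ℂ) ^ i * (-1 : ℂ) ^ (k - i)) =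
      if Even k then 1 else 0 := by
  have h : ∀ i ∈ Finset.range (k + 1), (1 : ℂ) ^ i * (-1 : ℂ) ^ (k - i)
      = (fun j => (-1 : ℂ) ^ (k - j)) i := by
    intro i _; simp
  rw [Finset.sum_congr rfl h]
  have h2 := Finset.sum_range_reflect (fun j => (-1 : ℂ) ^ (k - j)) (k + 1)
  · -- h2 : ∑ j in range (k+1), f (k+1-1-j) = ∑ j in range (k+1), f j
    rw [← h2]
    have h3 : ∀ j ∈ Finset.range (k + 1), (-1 : ℂ) ^ (k - (k + 1 - 1 - j)) = (-1 : ℂ) ^ j := by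
      intro j hj
      have : j < k + 1 := Finset.mem_range.mp hj
      congr 1
      omega
    rw [Finset.sum_congr rfl h3, sum_neg_one]

lemma sum_eps_opp2 (k : ℕ) :
    (∑ i ∈ Finset.range (k + 1), (-1 : ℂ) ^ i * (1 : ℂ) ^ (k - i)) =
      if Even k then 1 else 0 := by
  have h : ∀ i ∈ Finset.range (k + 1), (-1 : ℂ) ^ i * (1 : ℂ) ^ (k - i) = (-1 : ℂ) ^ i := by
    intro i _; simp
  rw [Finset.sum_congr rfl h, sum_neg_one]

lemma key (P : Ctx) (hP : P.Good) {p : ℕ} (hp : p.Prime) (a : ℕ) (ha : 1 ≤ a)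
    (x : ℂ) (hx2 : Complex.abs x ^ 2 ≤ 1 / 2) :
    Goals (fun k => P.r (p ^ k)) x a := by
  have hr : ∀ k, P.r (p ^ k) = ∑ i ∈ Finset.range (k + 1),
      (P.χ₁ ((p : ZMod P.d₁))) ^ i * (P.χ₂ ((p : ZMod P.d₂))) ^ (k - i) := fun k => r_pp P hp k
  have hv₁ := chi_vals P.χ₁ hP.2.2.2.2.2.2.1 ((p : ZMod P.d₁))
  have hv₂ := chi_vals P.χ₂ hP.2.2.2.2.2.2.2 ((p : ZMod P.d₂))
  rcases hv₁ with h1 | h1 | h1 <;> rcases hv₂ with h2 | h2 | h2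
  · exact goals_triv x a ha _ (fun k => by rw [hr k, h1, h2]; exact sum_eps_00 k)
  · exact goals_geom x hx2 a ha 1 (Or.inl rfl) _
      (fun k => by rw [hr k, h1, h2]; exact sum_eps_0r 1 k)
  · exact goals_geom x hx2 a ha (-1) (Or.inr rfl) _
      (fun k => by rw [hr k, h1, h2]; exact sum_eps_0r (-1) k)
  · exact goals_geom x hx2 a ha 1 (Or.inl rfl) _
      (fun k => by rw [hr k, h1, h2]; exact sum_eps_r0 1 k)
  · exact goals_same x hx2 a ha 1 (Or.inl rfl) _
      (fun k => by rw [hr k, h1, h2]; exact sum_eps_same 1 k)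
  · exact goals_alt x hx2 a ha _
      (fun k => by rw [hr k, h1, h2]; exact sum_eps_opp1 k)
  · exact goals_geom x hx2 a ha (-1) (Or.inr rfl) _
      (fun k => by rw [hr k, h1, h2]; exact sum_eps_r0 (-1) k)
  · exact goals_alt x hx2 a ha _
      (fun k => by rw [hr k, h1, h2]; exact sum_eps_opp2 k)
  · exact goals_same x hx2 a ha (-1) (Or.inr rfl) _
      (fun k => by rw [hr k, h1, h2]; exact sum_eps_same (-1) k)


lemma cpow_pow_eq (p k : ℕ) (s : ℂ) : (p : ℂ) ^ (-(k : ℂ) * s) = ((p : ℂ) ^ (-s)) ^ k := by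
  rw [show (-(k : ℂ) * s) = (k : ℂ) * (-s) by ring, Complex.cpow_nat_mul]

lemma absx_eq {p : ℕ} (hp : p.Prime) (s : ℂ) :
    Complex.abs ((p : ℂ) ^ (-s)) = (p : ℝ) ^ (-s.re) := by
  have hp0 : (0 : ℝ) < (p : ℝ) := by exact_mod_cast hp.pos
  rw [show ((p : ℂ)) = (((p : ℝ)) : ℂ) by push_cast; rfl,
    Complex.abs_cpow_eq_rpow_re_of_pos hp0, Complex.neg_re]

lemma absx_sq_le {p : ℕ} (hp : p.Prime) {s : ℂ} (hs : (1 / 2 : ℝ) ≤ s.re) :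
    Complex.abs ((p : ℂ) ^ (-s)) ^ 2 ≤ 1 / 2 := by
  have hp0 : (0 : ℝ) < (p : ℝ) := by exact_mod_cast hp.pos
  have hp1 : (1 : ℝ) ≤ (p : ℝ) := by exact_mod_cast hp.one_lt.le
  have hp2 : (2 : ℝ) ≤ (p : ℝ) := by exact_mod_cast hp.two_le
  rw [absx_eq hp s]
  have e1 : ((p : ℝ) ^ (-s.re)) ^ 2 = (p : ℝ) ^ (-s.re * 2) := by
    rw [← Real.rpow_natCast ((p : ℝ) ^ (-s.re)) 2, ← Real.rpow_mul hp0.le]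
    norm_num
  rw [e1]
  have e2 : (p : ℝ) ^ (-s.re * 2) ≤ (p : ℝ) ^ (-1 : ℝ) :=
    Real.rpow_le_rpow_of_exponent_le hp1 (by linarith)
  have e3 : (p : ℝ) ^ (-1 : ℝ) = ((p : ℝ))⁻¹ := by
    rw [Real.rpow_neg_one]
  have e4 : ((p : ℝ))⁻¹ ≤ (2 : ℝ)⁻¹ := by
    apply inv_anti₀ (by norm_num) hp2
  rw [e3] at e2
  calc (p : ℝ) ^ (-s.re * 2) ≤ ((p : ℝ))⁻¹ := e2
    _ ≤ (2 : ℝ)⁻¹ := e4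
    _ = 1 / 2 := by norm_num

theorem statement_5' (P : Ctx) (hP : P.Good) :
    (∀ m : ℕ, 0 < m → ∀ s : ℂ, (1 / 2 : ℝ) ≤ s.re →
      (∀ p ∈ m.primeFactors,
        Summable (fun k : ℕ => Complex.abs ((P.r (p ^ k)) ^ 2 * (p : ℂ) ^ (-(k : ℂ) * s))) ∧
        Summable (fun k : ℕ =>
          Complex.abs (P.r (p ^ (m.factorization p + k)) * P.r (p ^ k) *
            (p : ℂ) ^ (-(k : ℂ) * s))) ∧
        (∑' k : ℕ, (P.r (p ^ k)) ^ 2 * (p : ℂ) ^ (-(k : ℂ) * s)) ≠ 0) ∧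
      Complex.abs (P.Kf m s) ≤ (tauk 2000 m : ℝ)) ∧
    (∃ C : ℝ, ∀ p : ℕ, p.Prime → ∀ s : ℂ, (1 / 2 : ℝ) ≤ s.re →
      Complex.abs (P.Kf p s - P.r p) ≤ C * (p : ℝ) ^ (-s.re)) := by
  constructor
  · intro m hm s hs
    have hmain : ∀ p ∈ m.primeFactors, Goals (fun k => P.r (p ^ k)) ((p : ℂ) ^ (-s))
        (m.factorization p) := by
      intro p hpm
      have hp := Nat.prime_of_mem_primeFactors hpm
      have ha : 1 ≤ m.factorization p :=
        hp.factorization_pos_of_dvd (by omega) (Nat.dvd_of_mem_primeFactors hpm)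
      exact key P hP hp (m.factorization p) ha _ (absx_sq_le hp hs)
    have heA : ∀ p : ℕ, (∑' k : ℕ, (P.r (p ^ k)) ^ 2 * (p : ℂ) ^ (-(k : ℂ) * s))
        = ∑' k : ℕ, (P.r (p ^ k)) ^ 2 * ((p : ℂ) ^ (-s)) ^ k :=
      fun p => tsum_congr fun k => by rw [cpow_pow_eq]
    have heB : ∀ p : ℕ,
        (∑' k : ℕ, P.r (p ^ (m.factorization p + k)) * P.r (p ^ k) * (p : ℂ) ^ (-(k : ℂ) * s))
        = ∑' k : ℕ, P.r (p ^ (m.factorization p + k)) * P.r (p ^ k) * ((p : ℂ) ^ (-s)) ^ k :=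
      fun p => tsum_congr fun k => by rw [cpow_pow_eq]
    constructor
    · intro p hpm
      obtain ⟨S1, S2, S3, _, _⟩ := hmain p hpm
      refine ⟨?_, ?_, ?_⟩
      · exact (summable_congr (fun k => by rw [cpow_pow_eq])).mpr S1
      · exact (summable_congr (fun k => by rw [cpow_pow_eq])).mpr S2
      · rw [heA p]; exact S3
    · have hKf : Complex.abs (P.Kf m s) ≤
          ∏ p ∈ m.primeFactors, ((1999 : ℝ) * (m.factorization p : ℝ)) := by
        rw [Ctx.Kf, map_prod]
        apply Finset.prod_le_prod (fun p _ => Complex.abs.nonneg _)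
        intro p hpm
        obtain ⟨_, _, _, S4, _⟩ := hmain p hpm
        rw [heA p, heB p]
        exact S4
      have hcast : (∏ p ∈ m.primeFactors, ((1999 : ℝ) * (m.factorization p : ℝ)))
          = ((∏ p ∈ m.primeFactors, 1999 * m.factorization p : ℕ) : ℝ) := by
        rw [Nat.cast_prod]
        apply Finset.prod_congr rfl
        intro p _
        push_cast
        ring
      have hlow : ((∏ p ∈ m.primeFactors, 1999 * m.factorization p : ℕ) : ℝ)
          ≤ (tauk 2000 m : ℝ) := by
        exact_mod_cast tauk_lower m hm
      calc Complex.abs (P.Kf m s) ≤ _ := hKf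
        _ = _ := hcast
        _ ≤ (tauk 2000 m : ℝ) := hlow
  · refine ⟨7, ?_⟩
    intro p hp s hs
    obtain ⟨_, _, _, _, S5⟩ := key P hP hp 1 le_rfl ((p : ℂ) ^ (-s)) (absx_sq_le hp hs)
    have h5 := S5 rfl
    have hKfp : P.Kf p s =
        (∑' k : ℕ, (P.r (p ^ k)) ^ 2 * ((p : ℂ) ^ (-s)) ^ k)⁻¹ *
        (∑' k : ℕ, P.r (p ^ (1 + k)) * P.r (p ^ k) * ((p : ℂ) ^ (-s)) ^ k) := by
      rw [Ctx.Kf, Nat.Prime.primeFactors hp, Finset.prod_singleton,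
        Nat.Prime.factorization_self hp]
      congr 1
      · congr 1
        exact tsum_congr fun k => by rw [cpow_pow_eq]
      · exact tsum_congr fun k => by rw [cpow_pow_eq]
    rw [hKfp, ← absx_eq hp s]
    have : P.r p = P.r (p ^ 1) := by rw [pow_one]
    rw [this]
    exact h5

end Aux

theorem statement_5 (P : Ctx) (hP : P.Good) :
    (∀ m : ℕ, 0 < m → ∀ s : ℂ, (1 / 2 : ℝ) ≤ s.re →
      (∀ p ∈ m.primeFactors,
        Summable (fun k : ℕ => ‖(P.r (p ^ k)) ^ 2 * (p : ℂ) ^ (-(k : ℂ) * s)‖) ∧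
        Summable (fun k : ℕ =>
          ‖P.r (p ^ (m.factorization p + k)) * P.r (p ^ k) *
            (p : ℂ) ^ (-(k : ℂ) * s)‖) ∧
        (∑' k : ℕ, (P.r (p ^ k)) ^ 2 * (p : ℂ) ^ (-(k : ℂ) * s)) ≠ 0) ∧
      ‖P.Kf m s‖ ≤ (tauk 2000 m : ℝ)) ∧
    (∃ C : ℝ, ∀ p : ℕ, p.Prime → ∀ s : ℂ, (1 / 2 : ℝ) ≤ s.re →
      ‖P.Kf p s - P.r p‖ ≤ C * (p : ℝ) ^ (-s.re)) := by
  exact statement_5' P hP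

end EpsteinPaper
end
end

section
/- For l ∈ {1,2} and every z with Re z ≥ 0: (i) |K_{l,l}(p^α, z)| ≤ (1 − 1/p)^{−1} (α + 1 + (α−1)/p) ≤ 3α + 1 for every prime p and α ≥ 1; (ii) |K_{l,l}(m, z)| ≤ τ(m)² for every positive integer m; (iii) |K_{1,2}(m₁, m₂, z)| ≤ τ(m₁m₂)² whenever m₁, m₂ are coprime with d₂ | m₁ and d₁ | m₂; (iv) |(d/dz) K_{l,l}(m, z)| ≤ τ(m)² log m for every positive integer m, where τ is the number-of-divisors function. -/
noncomputable section

open Complex Finset MeasureTheory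

namespace EpsteinPaper

/-!
At a prime `p ∤ D` with `p ^ a ∥ m`, each Euler factor is a polynomial of degree at most `a` in
`p ^ (-z)` whose coefficients have total size at most `(1 - 1/p)⁻¹ (a + 1 + (a - 1)/p)` when
`Re z ≥ 0`; differentiating multiplies the monomial `p ^ (-j z)` by `-j log p` with `j ≤ a`.
So each factor is bounded by that quantity, which is at most `(a + 1)²`, and its derivative by
the same quantity times `a log p`. Across a product the bounds multiply and the factors
`a log p` add, which yields `τ(m)²` and `τ(m)² log m`; the prefactor `(m, d₁^∞)^(-z)` has
modulus at most `1` and contributes `log (m, d₁^∞)`. For `K_{1,2}` the divisor sum over `q`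
has at most `τ((m₁m₂/D, D^∞)) ≤ ∏_{p ∣ D} (a_p + 1)` terms.
-/

theorem norm_natCast_cpow_le_one {n : ℕ} (hn : 0 < n) {s : ℂ} (hs : s.re ≤ 0) :
    ‖(n : ℂ) ^ s‖ ≤ 1 := by
  simpa using norm_natCast_cpow_le_norm_natCast_cpow_of_pos hn (z := 0) hs

def eulerFactorBound (p a : ℕ) : ℝ := (1 - 1 / (p : ℝ))⁻¹ * ((a : ℝ) + 1 + ((a : ℝ) - 1) / (p : ℝ))

theorem one_sub_one_div_pos_of_two_le {p : ℕ} (hp : 2 ≤ p) : 0 < 1 - 1 / (p : ℝ) :=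
  sub_pos.2 ((div_lt_one (by positivity)).2 (by exact_mod_cast hp))

theorem one_le_eulerFactorBound {p : ℕ} (hp : 2 ≤ p) (a : ℕ) : 1 ≤ eulerFactorBound p a := by
  rw [eulerFactorBound, le_inv_mul_iff₀ (one_sub_one_div_pos_of_two_le hp), mul_one]
  have : 0 ≤ (a : ℝ) / p := by positivity
  linarith [show ((a : ℝ) - 1) / p = a / p - 1 / p by ring, (Nat.cast_nonneg a : (0 : ℝ) ≤ a)]

theorem eulerFactorBound_le {p : ℕ} (hp : 2 ≤ p) (a : ℕ) : eulerFactorBound p a ≤ 3 * a + 1 := by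
  have hx : 1 / (p : ℝ) ≤ 1 / 2 := one_div_le_one_div_of_le two_pos (by exact_mod_cast hp)
  rw [eulerFactorBound, inv_mul_le_iff₀ (one_sub_one_div_pos_of_two_le hp),
    div_eq_mul_one_div _ (p : ℝ)]
  nlinarith [(Nat.cast_nonneg a : (0 : ℝ) ≤ a)]

theorem eulerFactorBound_le_sq {p : ℕ} (hp : 2 ≤ p) (a : ℕ) :
    eulerFactorBound p a ≤ (a + 1) ^ 2 := by
  have : 3 * a + 1 ≤ (a + 1) ^ 2 := by nlinarith [Nat.le_self_pow two_ne_zero a]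
  exact (eulerFactorBound_le hp a).trans (by exact_mod_cast this)

theorem norm_inv_one_add_le {𝕜 : Type*} [NormedDivisionRing 𝕜] {w : 𝕜} {r : ℝ} (hw : ‖w‖ ≤ r)
    (hr : r < 1) : ‖(1 + w)⁻¹‖ ≤ (1 - r)⁻¹ := by
  rw [norm_inv]
  refine inv_anti₀ (sub_pos.2 hr) ?_
  have := norm_sub_norm_le (1 : 𝕜) (-w)
  rw [norm_one, norm_neg, sub_neg_eq_add] at this
  linarith

/-- `c` bounds the logarithmic derivative of `f` at `z`, measured against the bound `B` of
`‖f z‖`; under products the `B` multiply and the `c` add. -/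
def LogDerivBound {𝕜 : Type*} [NontriviallyNormedField 𝕜] (f : 𝕜 → 𝕜) (z : 𝕜) (B c : ℝ) :
    Prop :=
  ∃ f', HasDerivAt f f' z ∧ ‖f z‖ ≤ B ∧ ‖f'‖ ≤ B * c

namespace LogDerivBound

section NormedField

variable {𝕜 : Type*} [NontriviallyNormedField 𝕜] {f g : 𝕜 → 𝕜} {z : 𝕜} {A B B' a b c c' : ℝ}

theorem norm_le (h : LogDerivBound f z B c) : ‖f z‖ ≤ B :=
  h.choose_spec.2.1

theorem norm_deriv_le (h : LogDerivBound f z B c) : ‖deriv f z‖ ≤ B * c := by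
  obtain ⟨f', hf, -, hf'⟩ := h
  rwa [hf.deriv]

theorem mono (h : LogDerivBound f z B c) (hB : B ≤ B') (hc : c ≤ c') (hc' : 0 ≤ c') :
    LogDerivBound f z B' c' := by
  obtain ⟨f', hf, hfB, hf'⟩ := h
  have hB0 : 0 ≤ B := (norm_nonneg _).trans hfB
  refine ⟨f', hf, hfB.trans hB, hf'.trans ?_⟩
  calc B * c ≤ B * c' := mul_le_mul_of_nonneg_left hc hB0
    _ ≤ B' * c' := mul_le_mul_of_nonneg_right hB hc'

theorem const_mul (h : LogDerivBound f z B c) (k : 𝕜) :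
    LogDerivBound (fun w => k * f w) z (‖k‖ * B) c := by
  obtain ⟨f', hf, hfB, hf'⟩ := h
  refine ⟨k * f', hf.const_mul k, ?_, ?_⟩
  · rw [norm_mul]; gcongr
  · rw [norm_mul, mul_assoc]; gcongr

theorem mul_const (h : LogDerivBound f z B c) (k : 𝕜) :
    LogDerivBound (fun w => f w * k) z (B * ‖k‖) c := by
  simpa only [mul_comm _ k, mul_comm B] using h.const_mul k

theorem mul (hf : LogDerivBound f z A a) (hg : LogDerivBound g z B b) :
    LogDerivBound (fun w => f w * g w) z (A * B) (a + b) := by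
  obtain ⟨f', hf, hfA, hf'⟩ := hf
  obtain ⟨g', hg, hgB, hg'⟩ := hg
  have hA : 0 ≤ A := (norm_nonneg _).trans hfA
  have hAa : 0 ≤ A * a := (norm_nonneg _).trans hf'
  refine ⟨f' * g z + f z * g', hf.mul hg, by rw [norm_mul]; gcongr, ?_⟩
  calc ‖f' * g z + f z * g'‖ ≤ ‖f'‖ * ‖g z‖ + ‖f z‖ * ‖g'‖ := by
        simpa only [norm_mul] using norm_add_le (f' * g z) (f z * g')
    _ ≤ A * a * B + A * (B * b) := by gcongr
    _ = A * B * (a + b) := by ring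

theorem sub (hf : LogDerivBound f z A c) (hg : LogDerivBound g z B c) :
    LogDerivBound (fun w => f w - g w) z (A + B) c := by
  obtain ⟨f', hf, hfA, hf'⟩ := hf
  obtain ⟨g', hg, hgB, hg'⟩ := hg
  refine ⟨f' - g', hf.sub hg, (norm_sub_le _ _).trans (add_le_add hfA hgB), ?_⟩
  rw [add_mul]
  exact (norm_sub_le _ _).trans (add_le_add hf' hg')

theorem sum {ι : Type*} (s : Finset ι) {f : ι → 𝕜 → 𝕜} {B : ι → ℝ}
    (h : ∀ i ∈ s, LogDerivBound (f i) z (B i) c) :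
    LogDerivBound (fun w => ∑ i ∈ s, f i w) z (∑ i ∈ s, B i) c := by
  choose! f' hf hfB hf' using h
  refine ⟨∑ i ∈ s, f' i, HasDerivAt.fun_sum hf, ?_, ?_⟩
  · exact (norm_sum_le _ _).trans (sum_le_sum hfB)
  · rw [sum_mul]
    exact (norm_sum_le _ _).trans (sum_le_sum hf')

theorem prod {ι : Type*} (s : Finset ι) {f : ι → 𝕜 → 𝕜} {B c : ι → ℝ}
    (h : ∀ i ∈ s, LogDerivBound (f i) z (B i) (c i)) :
    LogDerivBound (fun w => ∏ i ∈ s, f i w) z (∏ i ∈ s, B i) (∑ i ∈ s, c i) := by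
  classical
  induction s using Finset.induction_on with
  | empty => exact ⟨0, by simpa using hasDerivAt_const z (1 : 𝕜), by simp, by simp⟩
  | insert i s hi ih =>
    simp only [prod_insert hi, sum_insert hi]
    exact (h i (mem_insert_self i s)).mul (ih fun j hj => h j (mem_insert_of_mem hj))

end NormedField

variable {z : ℂ}

theorem natCast_cpow {n : ℕ} (hn : 0 < n) {g : ℂ → ℂ} {g' : ℂ} (hg : HasDerivAt g g' z) :
    LogDerivBound (fun w => (n : ℂ) ^ g w) z ‖(n : ℂ) ^ g z‖ (‖g'‖ * Real.log n) := by
  refine ⟨_, hg.const_cpow (Or.inl (Nat.cast_ne_zero.2 hn.ne')), le_rfl, le_of_eq ?_⟩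
  rw [← natCast_log, norm_mul, norm_mul, norm_real, Real.norm_of_nonneg (Real.log_natCast_nonneg n)]
  ring

theorem natCast_cpow_neg {n : ℕ} (hn : 0 < n) (hz : 0 ≤ z.re) :
    LogDerivBound (fun w => (n : ℂ) ^ (-w)) z 1 (Real.log n) := by
  refine (natCast_cpow hn (hasDerivAt_id' z).neg).mono ?_ (by simp) (Real.log_natCast_nonneg n)
  exact norm_natCast_cpow_le_one hn (by simpa using hz)

theorem natCast_cpow_neg_add_one {n : ℕ} (hn : 0 < n) (hz : 0 ≤ z.re) :
    LogDerivBound (fun w => (n : ℂ) ^ (-(w + 1))) z (1 / n) (Real.log n) := by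
  refine (natCast_cpow hn ((hasDerivAt_id' z).add_const 1).neg).mono ?_ (by simp)
    (Real.log_natCast_nonneg n)
  rw [norm_natCast_cpow_of_pos hn, one_div, ← Real.rpow_neg_one]
  exact Real.rpow_le_rpow_of_exponent_le (by exact_mod_cast hn) (by simp; linarith)

theorem sum_natCast_cpow {n k : ℕ} (hn : 0 < n) {u : ℕ → ℂ} (hu : ∀ j, ‖u j‖ ≤ 1) {e : ℝ}
    (he : ∀ j < k, (j : ℝ) ≤ e) (hz : 0 ≤ z.re) :
    LogDerivBound (fun w => ∑ j ∈ range k, u j * (n : ℂ) ^ (-(j : ℂ) * w)) z k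
      (e * Real.log n) := by
  have hterm : ∀ j ∈ range k,
      LogDerivBound (fun w => u j * (n : ℂ) ^ (-(j : ℂ) * w)) z 1 (e * Real.log n) := by
    intro j hj
    have hje := he j (mem_range.1 hj)
    refine ((natCast_cpow hn ((hasDerivAt_id' z).const_mul (-(j : ℂ)))).const_mul (u j)).mono
      ?_ ?_ (mul_nonneg ((Nat.cast_nonneg j).trans hje) (Real.log_natCast_nonneg n))
    · refine mul_le_one₀ (hu j) (norm_nonneg _) (norm_natCast_cpow_le_one hn ?_)
      simpa using mul_nonneg (Nat.cast_nonneg j) hz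
    · simpa using mul_le_mul_of_nonneg_right hje (Real.log_natCast_nonneg n)
  simpa using sum (range k) hterm

theorem eulerFactor {p a : ℕ} (ha : 1 ≤ a) {C : ℂ} {S₁ S₂ W : ℂ → ℂ}
    (hC : ‖C‖ ≤ (1 - 1 / (p : ℝ))⁻¹)
    (h₁ : LogDerivBound S₁ z (a + 1 : ℕ) (a * Real.log p))
    (h₂ : LogDerivBound S₂ z (a - 1 : ℕ) ((a - 1) * Real.log p))
    (hW : LogDerivBound W z (1 / p) (Real.log p)) :
    LogDerivBound (fun w => C * (S₁ w - W w * S₂ w)) z (eulerFactorBound p a)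
      (a * Real.log p) := by
  have hc : 0 ≤ (a : ℝ) * Real.log p := by positivity
  have hWS : LogDerivBound (fun w => W w * S₂ w) z (1 / p * (a - 1 : ℕ)) (a * Real.log p) :=
    (hW.mul h₂).mono le_rfl (le_of_eq (by ring)) hc
  refine ((h₁.sub hWS).const_mul C).mono ?_ le_rfl hc
  calc ‖C‖ * ((a + 1 : ℕ) + 1 / p * (a - 1 : ℕ))
      ≤ (1 - 1 / (p : ℝ))⁻¹ * ((a + 1 : ℕ) + 1 / p * (a - 1 : ℕ)) := by gcongr
    _ = eulerFactorBound p a := by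
      rw [eulerFactorBound, Nat.cast_sub ha]
      push_cast
      ring

end LogDerivBound

theorem one_le_factorization_of_mem_primeFactors {m p : ℕ} (hp : p ∈ m.primeFactors) :
    1 ≤ m.factorization p := by
  obtain ⟨hp, hpm, hm⟩ := Nat.mem_primeFactors.1 hp
  exact hp.factorization_pos_of_dvd hm hpm

theorem card_divisors_le_prod_of_dvd {c n : ℕ} (hn : n ≠ 0) (hcn : c ∣ n) {s : Finset ℕ}
    (hs : c.primeFactors ⊆ s) : c.divisors.card ≤ ∏ p ∈ s, (n.factorization p + 1) := by
  have hc : c ≠ 0 := ne_zero_of_dvd_ne_zero hn hcn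
  rw [Nat.card_divisors hc]
  calc ∏ p ∈ c.primeFactors, (c.factorization p + 1)
      ≤ ∏ p ∈ c.primeFactors, (n.factorization p + 1) :=
        prod_le_prod' fun p _ =>
          Nat.add_le_add_right ((Nat.factorization_le_iff_dvd hc hn).2 hcn p) 1
    _ ≤ ∏ p ∈ s, (n.factorization p + 1) :=
        prod_le_prod_of_subset_of_one_le' hs fun _ _ _ => Nat.le_add_left 1 _

theorem tau_sq_eq_prod {m : ℕ} (hm : m ≠ 0) :
    (tau m : ℝ) ^ 2 = ∏ p ∈ m.primeFactors, ((m.factorization p : ℝ) + 1) ^ 2 := by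
  rw [tau, Nat.card_divisors hm]
  push_cast
  rw [prod_pow]

theorem prod_eulerFactorBound_le_tau_sq {m : ℕ} (hm : m ≠ 0) {s : Finset ℕ}
    (hs : s ⊆ m.primeFactors) :
    ∏ p ∈ s, eulerFactorBound p (m.factorization p) ≤ (tau m : ℝ) ^ 2 := by
  have two_le : ∀ p ∈ s, 2 ≤ p := fun p hp => (Nat.prime_of_mem_primeFactors (hs hp)).two_le
  rw [tau_sq_eq_prod hm]
  calc ∏ p ∈ s, eulerFactorBound p (m.factorization p)
      ≤ ∏ p ∈ s, ((m.factorization p : ℝ) + 1) ^ 2 :=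
        prod_le_prod (fun p hp => zero_le_one.trans (one_le_eulerFactorBound (two_le p hp) _))
          fun p hp => eulerFactorBound_le_sq (two_le p hp) _
    _ ≤ ∏ p ∈ m.primeFactors, ((m.factorization p : ℝ) + 1) ^ 2 :=
        prod_le_prod_of_subset_of_one_le hs (fun _ _ => by positivity)
          fun _ _ _ => one_le_pow₀ (le_add_of_nonneg_left (Nat.cast_nonneg _))

theorem corad_pos (m d : ℕ) : 0 < corad m d :=
  prod_pos fun _ hp => pow_pos (Nat.prime_of_mem_primeFactors (mem_filter.1 hp).1).pos _

theorem corad_dvd (m d : ℕ) : corad m d ∣ m := by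
  rcases eq_or_ne m 0 with rfl | hm
  · exact dvd_zero _
  conv_rhs => rw [← Nat.prod_factorization_pow_eq_self hm]
  exact prod_dvd_prod_of_subset _ _ _ (filter_subset _ _)

theorem primeFactors_corad_subset (m d : ℕ) :
    (corad m d).primeFactors ⊆ m.primeFactors.filter (· ∣ d) := by
  intro q hq
  have hq' := Nat.prime_of_mem_primeFactors hq
  obtain ⟨p, hp, hqp⟩ := hq'.prime.exists_mem_finset_dvd (Nat.dvd_of_mem_primeFactors hq)
  have hp' := Nat.prime_of_mem_primeFactors (mem_filter.1 hp).1
  rwa [(Nat.prime_dvd_prime_iff_eq hq' hp').1 (hq'.dvd_of_dvd_pow hqp)]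

theorem log_corad (m d : ℕ) :
    Real.log (corad m d) =
      ∑ p ∈ m.primeFactors.filter (· ∣ d), m.factorization p * Real.log p := by
  rw [corad]
  push_cast
  rw [Real.log_prod fun p hp => pow_ne_zero _
    (Nat.cast_ne_zero.2 (Nat.prime_of_mem_primeFactors (mem_filter.1 hp).1).ne_zero)]
  simp only [Real.log_pow]

theorem log_corad_add_sum_le {d D : ℕ} (hd : d ∣ D) (m : ℕ) :
    Real.log (corad m d) +
        ∑ p ∈ m.primeFactors.filter (fun p => ¬ p ∣ D), m.factorization p * Real.log p ≤
      Real.log m := by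
  rw [log_corad, Real.log_nat_eq_sum_factorization, Finsupp.sum, Nat.support_factorization,
    ← sum_filter_add_sum_filter_not m.primeFactors (· ∣ d)]
  gcongr

namespace Ctx

variable (P : Ctx) {z : ℂ}

theorem norm_chiD_le_one (n : ℕ) : ‖P.chiD n‖ ≤ 1 := by
  rw [chiD, norm_mul]
  exact mul_le_one₀ (P.χ₁.norm_le_one _) (norm_nonneg _) (P.χ₂.norm_le_one _)

theorem norm_inv_one_add_chiD_div_le {p : ℕ} (hp : 2 ≤ p) :
    ‖(1 + P.chiD p / p)⁻¹‖ ≤ (1 - 1 / (p : ℝ))⁻¹ := by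
  refine norm_inv_one_add_le ?_ (sub_pos.1 (one_sub_one_div_pos_of_two_le hp))
  rw [norm_div, Complex.norm_natCast]
  gcongr
  exact P.norm_chiD_le_one p

theorem logDerivBound_kllS_factor {p a : ℕ} (hp : p.Prime) (ha : 1 ≤ a) (hz : 0 ≤ z.re) :
    LogDerivBound (fun w => (1 + P.chiD p / (p : ℂ))⁻¹ * (P.χ₁ (p : ZMod P.d₁)) ^ a *
      ((∑ j ∈ range (a + 1), P.chiD (p ^ j) * (p : ℂ) ^ (-(j : ℂ) * w)) -
        (p : ℂ) ^ (-(w + 1)) * ∑ j ∈ range (a - 1), P.chiD (p ^ j) * (p : ℂ) ^ (-(j : ℂ) * w)))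
      z (eulerFactorBound p a) (a * Real.log p) := by
  refine LogDerivBound.eulerFactor ha ?_
    (LogDerivBound.sum_natCast_cpow hp.pos (fun _ => P.norm_chiD_le_one _)
      (fun j hj => by exact_mod_cast Nat.lt_succ_iff.1 hj) hz)
    (LogDerivBound.sum_natCast_cpow hp.pos (fun _ => P.norm_chiD_le_one _)
      (fun j hj => by rw [le_sub_iff_add_le]; exact_mod_cast (by omega : j + 1 ≤ a)) hz)
    (LogDerivBound.natCast_cpow_neg_add_one hp.pos hz)
  rw [norm_mul, norm_pow]
  exact (mul_le_of_le_one_right (norm_nonneg _) (pow_le_one₀ (norm_nonneg _)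
    (P.χ₁.norm_le_one _))).trans (P.norm_inv_one_add_chiD_div_le hp.two_le)

theorem logDerivBound_kllS (m : ℕ) (hz : 0 ≤ z.re) :
    LogDerivBound (P.KllS m) z
      (∏ p ∈ m.primeFactors.filter (fun p => ¬ p ∣ P.D), eulerFactorBound p (m.factorization p))
      (Real.log m) := by
  have hprefactor : LogDerivBound (fun w => ((corad m P.d₁ : ℕ) : ℂ) ^ (-w) *
      P.χ₁ ((corad m P.d₂ : ℕ) : ZMod P.d₁) * P.χ₂ ((corad m P.d₁ : ℕ) : ZMod P.d₂))
      z 1 (Real.log (corad m P.d₁)) := by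
    refine (((LogDerivBound.natCast_cpow_neg (corad_pos _ _) hz).mul_const _).mul_const _).mono
      ?_ le_rfl (Real.log_natCast_nonneg _)
    rw [one_mul]
    exact mul_le_one₀ (P.χ₁.norm_le_one _) (norm_nonneg _) (P.χ₂.norm_le_one _)
  have hfactors := LogDerivBound.prod (m.primeFactors.filter fun p => ¬ p ∣ P.D) fun p hp =>
    P.logDerivBound_kllS_factor (Nat.prime_of_mem_primeFactors (mem_filter.1 hp).1)
      (one_le_factorization_of_mem_primeFactors (mem_filter.1 hp).1) hz
  exact (hprefactor.mul hfactors).mono (one_mul _).le (log_corad_add_sum_le (dvd_mul_right _ _) m)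
    (Real.log_natCast_nonneg m)

theorem logDerivBound_kllS_tau {m : ℕ} (hm : m ≠ 0) (hz : 0 ≤ z.re) :
    LogDerivBound (P.KllS m) z ((tau m : ℝ) ^ 2) (Real.log m) :=
  (P.logDerivBound_kllS m hz).mono (prod_eulerFactorBound_le_tau_sq hm (filter_subset _ _)) le_rfl
    (Real.log_natCast_nonneg m)

theorem norm_kllS_prime_pow_le {p : ℕ} (hp : p.Prime) (a : ℕ) (hz : 0 ≤ z.re) :
    ‖P.KllS (p ^ a) z‖ ≤ eulerFactorBound p a := by
  have hsub : (p ^ a).primeFactors ⊆ {p} := by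
    rcases eq_or_ne a 0 with rfl | ha
    · simp
    · rw [Nat.primeFactors_prime_pow ha hp]
  refine (P.logDerivBound_kllS (p ^ a) hz).norm_le.trans ?_
  calc _ ≤ ∏ q ∈ {p}, eulerFactorBound q ((p ^ a).factorization q) :=
        prod_le_prod_of_subset_of_one_le ((filter_subset _ _).trans hsub)
          (fun q hq => zero_le_one.trans (one_le_eulerFactorBound
            (Nat.prime_of_mem_primeFactors (mem_filter.1 hq).1).two_le _))
          fun q hq _ => one_le_eulerFactorBound (mem_singleton.1 hq ▸ hp.two_le) _
    _ = eulerFactorBound p a := by simp [hp.factorization_pow]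

theorem logDerivBound_k12_factor {p a : ℕ} (hp : p.Prime) (ha : 1 ≤ a) (hz : 0 ≤ z.re) :
    LogDerivBound (fun w => (1 + P.chiD p / (p : ℂ))⁻¹ *
      ((∑ j ∈ range (a + 1), (p : ℂ) ^ (-(j : ℂ) * w)) -
        P.chiD p * (p : ℂ) ^ (-(w + 1)) * ∑ j ∈ range (a - 1), (p : ℂ) ^ (-(j : ℂ) * w)))
      z (eulerFactorBound p a) (a * Real.log p) := by
  have hsum (k : ℕ) {e : ℝ} (he : ∀ j < k, (j : ℝ) ≤ e) :
      LogDerivBound (fun w => ∑ j ∈ range k, (p : ℂ) ^ (-(j : ℂ) * w)) z k (e * Real.log p) := by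
    simpa only [one_mul] using
      LogDerivBound.sum_natCast_cpow hp.pos (u := fun _ => 1) (fun _ => norm_one.le) he hz
  refine LogDerivBound.eulerFactor ha (P.norm_inv_one_add_chiD_div_le hp.two_le)
    (hsum _ fun j hj => by exact_mod_cast Nat.lt_succ_iff.1 hj)
    (hsum _ fun j hj => by rw [le_sub_iff_add_le]; exact_mod_cast (by omega : j + 1 ≤ a)) ?_
  refine ((LogDerivBound.natCast_cpow_neg_add_one hp.pos hz).const_mul (P.chiD p)).mono ?_ le_rfl
    (Real.log_natCast_nonneg p)
  exact mul_le_of_le_one_left (by positivity) (P.norm_chiD_le_one p)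

theorem norm_k12_le {m₁ m₂ : ℕ} (h₁ : 0 < m₁) (h₂ : 0 < m₂) (hd₂ : P.d₂ ∣ m₁) (hd₁ : P.d₁ ∣ m₂)
    (hz : 0 ≤ z.re) : ‖P.K12 m₁ m₂ z‖ ≤ (tau (m₁ * m₂) : ℝ) ^ 2 := by
  set n := m₁ * m₂
  have hn : n ≠ 0 := by positivity
  have hDn : P.D ∣ n := by
    rw [D, show n = m₂ * m₁ from mul_comm _ _]
    exact mul_dvd_mul hd₁ hd₂
  set c := corad (n / P.D) P.D
  have hχ : ‖P.χ₁ (m₁ : ZMod P.d₁)‖ * ‖P.χ₂ (m₂ : ZMod P.d₂)‖ ≤ 1 :=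
    mul_le_one₀ (P.χ₁.norm_le_one _) (norm_nonneg _) (P.χ₂.norm_le_one _)
  have hq : ‖∑ q ∈ c.divisors, (q : ℂ) ^ (-z)‖ ≤ c.divisors.card := by
    refine (norm_sum_le _ _).trans ?_
    simpa using sum_le_sum fun q hq =>
      norm_natCast_cpow_le_one (Nat.pos_of_mem_divisors hq) (by simpa using hz)
  have hc : (c.divisors.card : ℝ) ≤ ∏ p ∈ n.primeFactors.filter (· ∣ P.D),
      ((n.factorization p : ℝ) + 1) ^ 2 := by
    have hcn : c ∣ n := (corad_dvd _ _).trans (Nat.div_dvd_of_dvd hDn)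
    have hsub : c.primeFactors ⊆ n.primeFactors.filter (· ∣ P.D) :=
      (primeFactors_corad_subset _ _).trans
        (filter_subset_filter _ (Nat.primeFactors_mono (Nat.div_dvd_of_dvd hDn) hn))
    exact_mod_cast (card_divisors_le_prod_of_dvd hn hcn hsub).trans
      (prod_le_prod' fun _ _ => Nat.le_self_pow two_ne_zero _)
  rw [K12, norm_mul, norm_mul, norm_mul, norm_prod]
  calc _ ≤ 1 * (∏ p ∈ n.primeFactors.filter (· ∣ P.D), ((n.factorization p : ℝ) + 1) ^ 2) *
        ∏ p ∈ n.primeFactors.filter (fun p => ¬ p ∣ P.D), ((n.factorization p : ℝ) + 1) ^ 2 := by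
        gcongr with p hp
        · exact hq.trans hc
        · have hp' := Nat.prime_of_mem_primeFactors (mem_filter.1 hp).1
          exact (P.logDerivBound_k12_factor hp'
            (one_le_factorization_of_mem_primeFactors (mem_filter.1 hp).1) hz).norm_le.trans
            (eulerFactorBound_le_sq hp'.two_le _)
    _ = (tau n : ℝ) ^ 2 := by rw [one_mul, prod_filter_mul_prod_filter_not, tau_sq_eq_prod hn]

theorem exists_kl_eq_kllS (l : Fin 2) : ∃ Q : Ctx, P.Kl l = Q.KllS := by
  unfold Kl
  split_ifs
  exacts [⟨P, rfl⟩, ⟨P.swap, rfl⟩]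

end Ctx

theorem statement_7_general (P : Ctx) :
    ∀ l : Fin 2, ∀ z : ℂ, 0 ≤ z.re →
      (∀ p : ℕ, p.Prime → ∀ a : ℕ, 1 ≤ a →
        ‖P.Kl l (p ^ a) z‖ ≤
          (1 - 1 / (p : ℝ))⁻¹ * ((a : ℝ) + 1 + ((a : ℝ) - 1) / (p : ℝ)) ∧
        (1 - 1 / (p : ℝ))⁻¹ * ((a : ℝ) + 1 + ((a : ℝ) - 1) / (p : ℝ)) ≤ 3 * (a : ℝ) + 1) ∧
      (∀ m : ℕ, 0 < m → ‖P.Kl l m z‖ ≤ (tau m : ℝ) ^ 2) ∧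
      (∀ m₁ m₂ : ℕ, 0 < m₁ → 0 < m₂ → Nat.Coprime m₁ m₂ → P.d₂ ∣ m₁ → P.d₁ ∣ m₂ →
        ‖P.K12 m₁ m₂ z‖ ≤ (tau (m₁ * m₂) : ℝ) ^ 2) ∧
      (∀ m : ℕ, 0 < m →
        ‖deriv (fun w : ℂ => P.Kl l m w) z‖ ≤ (tau m : ℝ) ^ 2 * Real.log m) := by
  intro l z hz
  obtain ⟨Q, hQ⟩ := P.exists_kl_eq_kllS l
  rw [hQ]
  exact ⟨fun p hp a _ => ⟨Q.norm_kllS_prime_pow_le hp a hz, eulerFactorBound_le hp.two_le a⟩,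
    fun m hm => (Q.logDerivBound_kllS_tau hm.ne' hz).norm_le,
    fun m₁ m₂ h₁ h₂ _ hd₂ hd₁ => P.norm_k12_le h₁ h₂ hd₂ hd₁ hz,
    fun m hm => (Q.logDerivBound_kllS_tau hm.ne' hz).norm_deriv_le⟩

theorem statement_7 (P : Ctx) (hP : P.Good) :
    ∀ l : Fin 2, ∀ z : ℂ, 0 ≤ z.re →
      (∀ p : ℕ, p.Prime → ∀ a : ℕ, 1 ≤ a →
        ‖P.Kl l (p ^ a) z‖ ≤
          (1 - 1 / (p : ℝ))⁻¹ * ((a : ℝ) + 1 + ((a : ℝ) - 1) / (p : ℝ)) ∧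
        (1 - 1 / (p : ℝ))⁻¹ * ((a : ℝ) + 1 + ((a : ℝ) - 1) / (p : ℝ)) ≤ 3 * (a : ℝ) + 1) ∧
      (∀ m : ℕ, 0 < m → ‖P.Kl l m z‖ ≤ (tau m : ℝ) ^ 2) ∧
      (∀ m₁ m₂ : ℕ, 0 < m₁ → 0 < m₂ → Nat.Coprime m₁ m₂ → P.d₂ ∣ m₁ → P.d₁ ∣ m₂ →
        ‖P.K12 m₁ m₂ z‖ ≤ (tau (m₁ * m₂) : ℝ) ^ 2) ∧
      (∀ m : ℕ, 0 < m →
        ‖deriv (fun w : ℂ => P.Kl l m w) z‖ ≤ (tau m : ℝ) ^ 2 * Real.log m) :=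
  statement_7_general P

end EpsteinPaper
end
end

section
/- For every positive integer m and every complex number s, one has the identity K_{1,1}(m, −s) · m^{−s} = K_{2,2}(m, s). -/
noncomputable section

open Complex Finset MeasureTheory

lemma DirichletCharacter.sq_eq_one_of_star_eq {d : ℕ} (χ : DirichletCharacter ℂ d)
    (hχ : ∀ a, star (χ a) = χ a) {a : ZMod d} (ha : IsUnit a) : χ a ^ 2 = 1 := by
  have h := Complex.mul_conj' (χ ha.unit)
  rw [DirichletCharacter.unit_norm_eq_one, IsUnit.unit_spec, ← Complex.star_def, hχ] at h
  simpa [sq] using h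

lemma pow_mul_geom_sum_mul_inv {w t : ℂ} (hw : w ^ 2 = 1) (ht : t ≠ 0) (n : ℕ) :
    t ^ n * ∑ j ∈ range n, (w * t⁻¹) ^ j = w ^ (n + 1) * t * ∑ j ∈ range n, (w * t) ^ j := by
  induction n with
  | zero => simp
  | succ n ih =>
    have hw' : w ^ (2 * n + 2) = 1 := by rw [pow_add, pow_mul, hw, one_pow, one_mul]
    have ht' : t ^ (n + 1) * (w * t⁻¹) = w * t ^ n := by field_simp; ring
    rw [geom_sum_succ (x := w * t⁻¹), geom_sum_succ' (x := w * t)]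
    linear_combination w * ih + (∑ j ∈ range n, (w * t⁻¹) ^ j) * ht' - t ^ (n + 1) * hw'

lemma Complex.natCast_prod_cpow {ι : Type*} (s : Finset ι) (f : ι → ℕ) (z : ℂ) :
    ((∏ i ∈ s, f i : ℕ) : ℂ) ^ z = ∏ i ∈ s, ((f i : ℕ) : ℂ) ^ z := by
  induction s using Finset.cons_induction with
  | empty => simp
  | cons a s ha ih => rw [prod_cons, prod_cons, Nat.cast_mul, natCast_mul_natCast_cpow, ih]

namespace EpsteinPaper

def localFactor (u v x t : ℂ) (a : ℕ) : ℂ :=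
  (1 + u * v / x)⁻¹ * u ^ a *
    (∑ j ∈ range (a + 1), (u * v * t) ^ j - t * x⁻¹ * ∑ j ∈ range (a - 1), (u * v * t) ^ j)

lemma pow_mul_localFactor_inv {u v x t : ℂ} (hu : u ^ 2 = 1) (hv : v ^ 2 = 1) (ht : t ≠ 0)
    {a : ℕ} (ha : a ≠ 0) : t ^ a * localFactor u v x t⁻¹ a = localFactor v u x t a := by
  obtain ⟨n, rfl⟩ := Nat.exists_eq_add_one_of_ne_zero ha
  have hw : (u * v) ^ 2 = 1 := by rw [mul_pow, hu, hv, one_mul]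
  have hu' : u ^ (2 * (n + 1)) = 1 := by rw [pow_mul, hu, one_pow]
  set S₁ := ∑ j ∈ range (n + 2), (u * v * t⁻¹) ^ j
  set S₀ := ∑ j ∈ range n, (u * v * t⁻¹) ^ j
  set S₁' := ∑ j ∈ range (n + 2), (u * v * t) ^ j
  set S₀' := ∑ j ∈ range n, (u * v * t) ^ j
  have h₁ : t ^ (n + 1) * S₁ = (u * v) ^ (n + 1) * S₁' := by
    refine mul_left_cancel₀ ht ?_
    linear_combination pow_mul_geom_sum_mul_inv hw ht (n + 2) + t * (u * v) ^ (n + 1) * S₁' * hw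
  have h₀ : t ^ (n + 1) * (t⁻¹ * S₀) = (u * v) ^ (n + 1) * t * S₀' := by
    rw [pow_succ, mul_assoc, mul_inv_cancel_left₀ ht]
    exact pow_mul_geom_sum_mul_inv hw ht n
  unfold localFactor
  rw [mul_comm v u, Nat.add_sub_cancel]
  linear_combination (1 + u * v / x)⁻¹ * u ^ (n + 1) * (h₁ - x⁻¹ * h₀) +
    (1 + u * v / x)⁻¹ * v ^ (n + 1) * (S₁' - t * x⁻¹ * S₀') * hu'

lemma corad_ne_zero (m d : ℕ) : corad m d ≠ 0 :=
  prod_ne_zero_iff.mpr fun _ hp ↦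
    pow_ne_zero _ (Nat.prime_of_mem_primeFactors (mem_filter.mp hp).1).ne_zero

lemma corad_mul_prod_filter_not_dvd {m : ℕ} (hm : m ≠ 0) (d : ℕ) :
    corad m d * ∏ p ∈ m.primeFactors.filter (fun p ↦ ¬ p ∣ d), p ^ m.factorization p = m := by
  rw [corad, prod_filter_mul_prod_filter_not, ← Nat.prod_primeFactors_pow_factorization hm]

lemma corad_mul_of_coprime (m : ℕ) {d₁ d₂ : ℕ} (h : d₁.Coprime d₂) :
    corad m (d₁ * d₂) = corad m d₁ * corad m d₂ := by
  have hfilter : m.primeFactors.filter (fun p ↦ p ∣ d₁ * d₂) =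
      m.primeFactors.filter (fun p ↦ p ∣ d₁) ∪ m.primeFactors.filter (fun p ↦ p ∣ d₂) := by
    rw [← filter_or]
    exact filter_congr fun p hp ↦ (Nat.prime_of_mem_primeFactors hp).dvd_mul
  have hdisj : Disjoint (m.primeFactors.filter (fun p ↦ p ∣ d₁))
      (m.primeFactors.filter (fun p ↦ p ∣ d₂)) :=
    disjoint_filter.mpr fun p hp h₁ h₂ ↦
      (Nat.prime_of_mem_primeFactors hp).one_lt.ne' (Nat.eq_one_of_dvd_coprimes h h₁ h₂)
  rw [corad, hfilter, prod_union hdisj]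
  rfl

lemma natCast_cpow_eq_corad_mul_prod {m : ℕ} (hm : m ≠ 0) (d : ℕ) (z : ℂ) :
    (m : ℂ) ^ z = (corad m d : ℂ) ^ z *
      ∏ p ∈ m.primeFactors.filter (fun p ↦ ¬ p ∣ d), ((p ^ m.factorization p : ℕ) : ℂ) ^ z := by
  conv_lhs => rw [← corad_mul_prod_filter_not_dvd hm d]
  rw [Nat.cast_mul, natCast_mul_natCast_cpow, Complex.natCast_prod_cpow]

namespace Ctx

lemma KllS_eq (P : Ctx) (m : ℕ) (z : ℂ) :
    P.KllS m z = (corad m P.d₁ : ℂ) ^ (-z) *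
      P.χ₁ (corad m P.d₂ : ZMod P.d₁) * P.χ₂ (corad m P.d₁ : ZMod P.d₂) *
      ∏ p ∈ m.primeFactors.filter (fun p ↦ ¬ p ∣ P.D),
        localFactor (P.χ₁ p) (P.χ₂ p) p ((p : ℂ) ^ (-z)) (m.factorization p) := by
  refine congrArg _ (prod_congr rfl fun p hp ↦ ?_)
  have hp₀ : (p : ℂ) ≠ 0 :=
    Nat.cast_ne_zero.mpr (Nat.pos_of_mem_primeFactors (mem_filter.mp hp).1).ne'
  have hterm (j : ℕ) : P.chiD (p ^ j) * (p : ℂ) ^ (-(j : ℂ) * z) =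
      (P.χ₁ p * P.χ₂ p * (p : ℂ) ^ (-z)) ^ j := by
    rw [chiD, Nat.cast_pow, Nat.cast_pow, map_pow, map_pow, neg_mul, ← mul_neg, cpow_nat_mul,
      mul_pow, mul_pow]
  simp only [hterm, localFactor]
  rw [neg_add, cpow_add _ _ hp₀, cpow_neg_one, chiD]

lemma swap_D (P : Ctx) : P.swap.D = P.D :=
  mul_comm _ _

lemma swap_KllS_eq (P : Ctx) (m : ℕ) (z : ℂ) :
    P.swap.KllS m z = (corad m P.d₂ : ℂ) ^ (-z) *
      P.χ₂ (corad m P.d₁ : ZMod P.d₂) * P.χ₁ (corad m P.d₂ : ZMod P.d₁) *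
      ∏ p ∈ m.primeFactors.filter (fun p ↦ ¬ p ∣ P.D),
        localFactor (P.χ₂ p) (P.χ₁ p) p ((p : ℂ) ^ (-z)) (m.factorization p) := by
  rw [KllS_eq, swap_D]
  rfl

lemma localFactor_neg_mul_cpow (P : Ctx) (hr₁ : ∀ a, star (P.χ₁ a) = P.χ₁ a)
    (hr₂ : ∀ a, star (P.χ₂ a) = P.χ₂ a) {p : ℕ} (hp : p.Prime) (hpD : ¬ p ∣ P.D) {a : ℕ}
    (ha : a ≠ 0) (s : ℂ) :
    localFactor (P.χ₁ p) (P.χ₂ p) p ((p : ℂ) ^ (-(-s))) a * ((p ^ a : ℕ) : ℂ) ^ (-s) =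
      localFactor (P.χ₂ p) (P.χ₁ p) p ((p : ℂ) ^ (-s)) a := by
  rw [D, hp.dvd_mul, not_or] at hpD
  have hu :=
    DirichletCharacter.sq_eq_one_of_star_eq P.χ₁ hr₁ (ZMod.isUnit_prime_of_not_dvd hp hpD.1)
  have hv :=
    DirichletCharacter.sq_eq_one_of_star_eq P.χ₂ hr₂ (ZMod.isUnit_prime_of_not_dvd hp hpD.2)
  have ht : (p : ℂ) ^ (-s) ≠ 0 := cpow_ne_zero_iff.mpr (Or.inl (Nat.cast_ne_zero.mpr hp.ne_zero))
  rw [cpow_neg _ (-s), Nat.cast_pow, ← natCast_cpow_natCast_mul, cpow_nat_mul, mul_comm,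
    pow_mul_localFactor_inv hu hv ht ha]

lemma KllS_neg_mul_cpow (P : Ctx) (hr₁ : ∀ a, star (P.χ₁ a) = P.χ₁ a)
    (hr₂ : ∀ a, star (P.χ₂ a) = P.χ₂ a) (hcop : P.d₁.Coprime P.d₂) {m : ℕ} (hm : m ≠ 0) (s : ℂ) :
    P.KllS m (-s) * (m : ℂ) ^ (-s) = P.swap.KllS m s := by
  have hprime : (∏ p ∈ m.primeFactors.filter (fun p ↦ ¬ p ∣ P.D),
        localFactor (P.χ₁ p) (P.χ₂ p) p ((p : ℂ) ^ (-(-s))) (m.factorization p)) *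
      ∏ p ∈ m.primeFactors.filter (fun p ↦ ¬ p ∣ P.D), ((p ^ m.factorization p : ℕ) : ℂ) ^ (-s) =
      ∏ p ∈ m.primeFactors.filter (fun p ↦ ¬ p ∣ P.D),
        localFactor (P.χ₂ p) (P.χ₁ p) p ((p : ℂ) ^ (-s)) (m.factorization p) := by
    rw [← prod_mul_distrib]
    refine prod_congr rfl fun p hp ↦ ?_
    obtain ⟨hpm, hpD⟩ := mem_filter.mp hp
    exact P.localFactor_neg_mul_cpow hr₁ hr₂ (Nat.prime_of_mem_primeFactors hpm) hpD
      (Finsupp.mem_support_iff.mp (Nat.support_factorization m ▸ hpm)) s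
  have hcorad : (corad m P.d₁ : ℂ) ^ (-s) ≠ 0 :=
    cpow_ne_zero_iff.mpr (Or.inl (Nat.cast_ne_zero.mpr (corad_ne_zero m P.d₁)))
  rw [KllS_eq, swap_KllS_eq, natCast_cpow_eq_corad_mul_prod hm P.D,
    show corad m P.D = corad m P.d₁ * corad m P.d₂ from corad_mul_of_coprime m hcop,
    Nat.cast_mul, natCast_mul_natCast_cpow, ← hprime, cpow_neg _ (-s)]
  field_simp

end Ctx

theorem statement_19 (P : Ctx) (hP : P.Good) :
    ∀ m : ℕ, 0 < m → ∀ s : ℂ,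
      P.KllS m (-s) * (m : ℂ) ^ (-s) = P.swap.KllS m s := by
  obtain ⟨-, -, hcop, -, -, -, hr₁, hr₂⟩ := hP
  exact fun m hm s ↦ P.KllS_neg_mul_cpow hr₁ hr₂ hcop hm.ne' s

end EpsteinPaper
end
end
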